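/- arXiv:2506.22522 — 6 statements merged into one kernel-verified Lean document; each statement's English description precedes it below -/
import Mathlib

section
/- Let E be a Banach space over 𝕂 (𝕂 = ℝ or ℂ) and let 𝓕 = ((a_m, b_m*))_{m≥1} be an unconditional Schauder frame for E. Then 𝓕 is a Besselian Schauder frame for E; that is, there exists a constant B > 0 such that ∑_{m=1}^∞ |b_m*(x)| |f*(a_m)| ≤ B ‖x‖_E ‖f*‖_{E*} for every x ∈ E and every f* ∈ E*. -/
open Filter Finset

/-- `((a_m, b_m*))` is an unconditional Schauder frame for `E`: for every `x ∈ E`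
and every permutation `σ` of the indices, the rearranged series
`∑ b_{σ(m)}*(x) a_{σ(m)}` converges to `x`. -/
def IsUnconditionalSchauderFrame {𝕂 : Type*} [RCLike 𝕂] {E : Type*}
    [NormedAddCommGroup E] [NormedSpace 𝕂 E]
    (a : ℕ → E) (b : ℕ → E →L[𝕂] 𝕂) : Prop :=
  ∀ x : E, ∀ σ : Equiv.Perm ℕ,
    Tendsto (fun M : ℕ => ∑ m ∈ Finset.range M, b (σ m) x • a (σ m)) atTop (nhds x)

namespace USFBesselAux

/-- Given strictly increasing block boundaries `n` starting at `0` and finsets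
`F k ⊆ [n k, n (k+1))`, there is a permutation of `ℕ` which, on each block,
enumerates the elements of `F k` first. -/
lemma exists_block_perm (n : ℕ → ℕ) (hn : StrictMono n) (h0 : n 0 = 0)
    (F : ℕ → Finset ℕ) (hF : ∀ k, F k ⊆ Finset.Ico (n k) (n (k+1))) :
    ∃ σ : Equiv.Perm ℕ, ∀ k,
      (Finset.Ico (n k) (n k + (F k).card)).image σ = F k := by
  classical
  set G : ℕ → Finset ℕ := fun k => Finset.Ico (n k) (n (k+1)) \ F k with hGdef
  have hGsub : ∀ k, G k ⊆ Finset.Ico (n k) (n (k+1)) := fun k => Finset.sdiff_subset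
  have hcL : ∀ k, n k + (F k).card ≤ n (k+1) := by
    intro k
    have h1 : (F k).card ≤ n (k+1) - n k := by
      have := Finset.card_le_card (hF k)
      simpa [Nat.card_Ico] using this
    have h2 : n k ≤ n (k+1) := (hn (Nat.lt_succ_self k)).le
    omega
  have hGcard : ∀ k, (F k).card + (G k).card = n (k+1) - n k := by
    intro k
    have h1 : (G k).card = (n (k+1) - n k) - (F k).card := by
      have := Finset.card_sdiff_of_subset (hF k)
      simpa [hGdef, Nat.card_Ico] using this
    have h2 : (F k).card ≤ n (k+1) - n k := by
      have := Finset.card_le_card (hF k)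
      simpa [Nat.card_Ico] using this
    omega
  -- the block index of `m`
  set bi : ℕ → ℕ := fun m => Nat.findGreatest (fun j => n j ≤ m) m with hbidef
  have hbi1 : ∀ m, n (bi m) ≤ m := by
    intro m
    exact Nat.findGreatest_spec (P := fun j => n j ≤ m) (Nat.zero_le m) (by simp [h0])
  have hbi2 : ∀ m, m < n (bi m + 1) := by
    intro m
    by_cases h : bi m + 1 ≤ m
    · by_contra hcon
      push_neg at hcon
      exact Nat.findGreatest_is_greatest (Nat.lt_succ_self _) h hcon
    · push_neg at h
      exact lt_of_lt_of_le h hn.le_apply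
  have hbi_eq : ∀ k m, n k ≤ m → m < n (k+1) → bi m = k := by
    intro k m h1 h2
    rcases lt_trichotomy (bi m) k with h | h | h
    · exfalso
      have : n (bi m + 1) ≤ n k := hn.monotone h
      have := hbi2 m
      omega
    · exact h
    · exfalso
      have : n (k + 1) ≤ n (bi m) := hn.monotone h
      have := hbi1 m
      omega
  -- the sorted list of block `k`, `F k` first
  set l : ℕ → List ℕ := fun k =>
    (F k).sort (· ≤ ·) ++ (G k).sort (· ≤ ·) with hldef
  have hllen : ∀ k, (l k).length = n (k+1) - n k := by
    intro k
    simp [hldef, Finset.length_sort]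
    have := hGcard k
    omega
  have hlnodup : ∀ k, (l k).Nodup := by
    intro k
    refine List.Nodup.append (Finset.sort_nodup _ _) (Finset.sort_nodup _ _) ?_
    intro y hy1 hy2
    rw [Finset.mem_sort] at hy1 hy2
    rw [hGdef] at hy2
    exact (Finset.mem_sdiff.1 hy2).2 hy1
  -- the per-block map
  set e : ℕ → ℕ → ℕ := fun k m => (l k).getD (m - n k) 0 with hedef
  have he1 : ∀ k m, n k ≤ m → m < n k + (F k).card → e k m ∈ F k := by
    intro k m h1 h2
    have hi : m - n k < ((F k).sort (· ≤ ·)).length := by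
      rw [Finset.length_sort]; omega
    have : e k m = ((F k).sort (· ≤ ·)).getD (m - n k) 0 := by
      simp only [hedef, hldef]
      exact List.getD_append _ _ _ _ hi
    rw [this, List.getD_eq_getElem _ _ hi]
    rw [← Finset.mem_sort (· ≤ ·)]
    exact List.getElem_mem _
  have he2 : ∀ k m, n k + (F k).card ≤ m → m < n (k+1) → e k m ∈ G k := by
    intro k m h1 h2
    have hlen1 : ((F k).sort (· ≤ ·)).length = (F k).card := Finset.length_sort _
    have hge : ((F k).sort (· ≤ ·)).length ≤ m - n k := by omega
    have hi : m - n k - (F k).card < ((G k).sort (· ≤ ·)).length := by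
      rw [Finset.length_sort]
      have := hGcard k
      have := hn (Nat.lt_succ_self k)
      omega
    have : e k m = ((G k).sort (· ≤ ·)).getD (m - n k - (F k).card) 0 := by
      simp only [hedef, hldef]
      rw [List.getD_append_right _ _ _ _ hge, hlen1]
    rw [this, List.getD_eq_getElem _ _ hi]
    rw [← Finset.mem_sort (· ≤ ·)]
    exact List.getElem_mem _
  have heInj : ∀ k m1 m2, n k ≤ m1 → m1 < n (k+1) → n k ≤ m2 → m2 < n (k+1) →
      e k m1 = e k m2 → m1 = m2 := by
    intro k m1 m2 ha1 ha2 hb1 hb2 heq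
    have hi1 : m1 - n k < (l k).length := by rw [hllen]; omega
    have hi2 : m2 - n k < (l k).length := by rw [hllen]; omega
    simp only [hedef] at heq
    rw [List.getD_eq_getElem _ _ hi1, List.getD_eq_getElem _ _ hi2] at heq
    have := ((hlnodup k).getElem_inj_iff ).1 heq
    omega
  have heSurjF : ∀ k y, y ∈ F k → ∃ m, n k ≤ m ∧ m < n k + (F k).card ∧ e k m = y := by
    intro k y hy
    rw [← Finset.mem_sort (· ≤ ·)] at hy
    obtain ⟨i, hil, hiv⟩ := List.mem_iff_getElem.1 hy
    have hil' : i < (F k).card := by rwa [Finset.length_sort] at hil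
    refine ⟨n k + i, Nat.le_add_right _ _, by omega, ?_⟩
    simp only [hedef, hldef, Nat.add_sub_cancel_left]
    rw [List.getD_append _ _ _ _ hil, List.getD_eq_getElem _ _ hil]
    exact hiv
  have heSurjG : ∀ k y, y ∈ G k → ∃ m, n k + (F k).card ≤ m ∧ m < n (k+1) ∧ e k m = y := by
    intro k y hy
    rw [← Finset.mem_sort (· ≤ ·)] at hy
    obtain ⟨i, hil, hiv⟩ := List.mem_iff_getElem.1 hy
    have hil' : i < (G k).card := by rwa [Finset.length_sort] at hil
    have hlen1 : ((F k).sort (· ≤ ·)).length = (F k).card := Finset.length_sort _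
    refine ⟨n k + (F k).card + i, Nat.le_add_right _ _, by have := hGcard k; omega, ?_⟩
    simp only [hedef, hldef]
    have hsub : n k + (F k).card + i - n k = (F k).card + i := by omega
    rw [hsub]
    rw [List.getD_append_right _ _ _ _ (by omega), hlen1]
    have : (F k).card + i - (F k).card = i := by omega
    rw [this, List.getD_eq_getElem _ _ hil]
    exact hiv
  -- the global map
  set g : ℕ → ℕ := fun m => e (bi m) m with hgdef
  have hg_block : ∀ k m, n k ≤ m → m < n (k+1) → g m = e k m := by
    intro k m h1 h2
    simp only [hgdef, hbi_eq k m h1 h2]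
  have hg_mem : ∀ k m, n k ≤ m → m < n (k+1) → g m ∈ Finset.Ico (n k) (n (k+1)) := by
    intro k m h1 h2
    rw [hg_block k m h1 h2]
    by_cases h : m < n k + (F k).card
    · exact hF k (he1 k m h1 h)
    · push_neg at h
      exact hGsub k (he2 k m h h2)
  have hinj : Function.Injective g := by
    intro m1 m2 heq
    have hk1 := hbi_eq (bi m1) (g m1) (by
      have := hg_mem (bi m1) m1 (hbi1 m1) (hbi2 m1)
      exact (Finset.mem_Ico.1 this).1) (by
      have := hg_mem (bi m1) m1 (hbi1 m1) (hbi2 m1)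
      exact (Finset.mem_Ico.1 this).2)
    have hk2 := hbi_eq (bi m2) (g m2) (by
      have := hg_mem (bi m2) m2 (hbi1 m2) (hbi2 m2)
      exact (Finset.mem_Ico.1 this).1) (by
      have := hg_mem (bi m2) m2 (hbi1 m2) (hbi2 m2)
      exact (Finset.mem_Ico.1 this).2)
    have hkk : bi m1 = bi m2 := by rw [← hk1, ← hk2, heq]
    have h1 := hbi1 m1; have h2 := hbi2 m1
    have h3 := hbi1 m2; have h4 := hbi2 m2
    rw [hkk] at h1 h2
    refine heInj (bi m2) m1 m2 h1 h2 h3 h4 ?_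
    rw [← hg_block (bi m2) m1 h1 h2, ← hg_block (bi m2) m2 h3 h4, heq]
  have hsurj : Function.Surjective g := by
    intro y
    set k := bi y with hk
    have hy1 := hbi1 y
    have hy2 := hbi2 y
    by_cases hyF : y ∈ F k
    · obtain ⟨m, hm1, hm2, hm3⟩ := heSurjF k y hyF
      exact ⟨m, by rw [hg_block k m hm1 (lt_of_lt_of_le hm2 (hcL k))]; exact hm3⟩
    · have hyG : y ∈ G k := by
        rw [hGdef]
        exact Finset.mem_sdiff.2 ⟨Finset.mem_Ico.2 ⟨hy1, hy2⟩, hyF⟩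
      obtain ⟨m, hm1, hm2, hm3⟩ := heSurjG k y hyG
      exact ⟨m, by rw [hg_block k m (le_trans (Nat.le_add_right _ _) hm1) hm2]; exact hm3⟩
  refine ⟨Equiv.ofBijective g ⟨hinj, hsurj⟩, ?_⟩
  intro k
  have hsub : (Finset.Ico (n k) (n k + (F k).card)).image (Equiv.ofBijective g ⟨hinj, hsurj⟩) ⊆ F k := by
    intro y hy
    obtain ⟨m, hm, rfl⟩ := Finset.mem_image.1 hy
    rw [Finset.mem_Ico] at hm
    show g m ∈ F k
    rw [hg_block k m hm.1 (lt_of_lt_of_le hm.2 (hcL k))]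
    exact he1 k m hm.1 hm.2
  refine Finset.eq_of_subset_of_card_le hsub ?_
  have : ((Finset.Ico (n k) (n k + (F k).card)).image (Equiv.ofBijective g ⟨hinj, hsurj⟩)).card
      = (Finset.Ico (n k) (n k + (F k).card)).card := by
    apply Finset.card_image_of_injective
    exact (Equiv.ofBijective g ⟨hinj, hsurj⟩).injective
  rw [this, Nat.card_Ico]
  omega

/-- Unconditional convergence implies uniform smallness of tail finite subsums. -/
lemma vanishing {E : Type*} [NormedAddCommGroup E] (v : ℕ → E) (x : E)
    (H : ∀ σ : Equiv.Perm ℕ,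
      Tendsto (fun M : ℕ => ∑ m ∈ Finset.range M, v (σ m)) atTop (nhds x)) :
    ∀ ε : ℝ, 0 < ε → ∃ N : ℕ, ∀ t : Finset ℕ, (∀ m ∈ t, N ≤ m) →
      ‖∑ m ∈ t, v m‖ ≤ ε := by
  intro ε hε
  by_contra hcon
  push_neg at hcon
  choose t ht1 ht2 using hcon
  -- build the blocks
  set n : ℕ → ℕ := fun k => Nat.rec 0 (fun _ p => max (p+1) ((t p).sup id + 1)) k with hndef
  have hn0 : n 0 = 0 := rfl
  have hnsucc : ∀ k, n (k+1) = max (n k + 1) ((t (n k)).sup id + 1) := fun k => rfl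
  have hnmono : StrictMono n := by
    apply strictMono_nat_of_lt_succ
    intro k
    rw [hnsucc k]
    omega
  set F : ℕ → Finset ℕ := fun k => t (n k) with hFdef
  have hFsub : ∀ k, F k ⊆ Finset.Ico (n k) (n (k+1)) := by
    intro k m hm
    rw [Finset.mem_Ico]
    refine ⟨ht1 (n k) m hm, ?_⟩
    have : m ≤ (t (n k)).sup id := Finset.le_sup (f := id) hm
    rw [hnsucc k]
    omega
  have hFnorm : ∀ k, ε < ‖∑ m ∈ F k, v m‖ := fun k => ht2 (n k)
  obtain ⟨σ, hσ⟩ := exists_block_perm n hnmono hn0 F hFsub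
  -- convergence along σ gives a Cauchy sequence of partial sums
  have hcauchy : CauchySeq (fun M : ℕ => ∑ m ∈ Finset.range M, v (σ m)) :=
    (H σ).cauchySeq
  rw [Metric.cauchySeq_iff] at hcauchy
  obtain ⟨N, hN⟩ := hcauchy ε hε
  -- the block N gives a contradiction
  have hkN : N ≤ n N := hnmono.le_apply
  have hp : N ≤ n N + (F N).card := le_trans hkN (Nat.le_add_right _ _)
  have := hN (n N + (F N).card) hp (n N) hkN
  rw [dist_eq_norm] at this
  have hsum : (∑ m ∈ Finset.range (n N + (F N).card), v (σ m))
      - ∑ m ∈ Finset.range (n N), v (σ m)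
      = ∑ m ∈ Finset.Ico (n N) (n N + (F N).card), v (σ m) := by
    rw [Finset.sum_Ico_eq_sub _ (Nat.le_add_right _ _)]
  have himg := Finset.sum_image (s := Finset.Ico (n N) (n N + (F N).card))
    (g := fun m => σ m) (f := v) (fun a _ b _ h => σ.injective h)
  rw [hσ N] at himg
  rw [hsum, ← himg] at this
  exact absurd this (not_lt.2 (hFnorm N).le)

/-- Unconditional convergence implies a uniform bound on all finite subsums. -/
lemma bounded {E : Type*} [NormedAddCommGroup E] (v : ℕ → E) (x : E)
    (H : ∀ σ : Equiv.Perm ℕ,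
      Tendsto (fun M : ℕ => ∑ m ∈ Finset.range M, v (σ m)) atTop (nhds x)) :
    ∃ C : ℝ, ∀ t : Finset ℕ, ‖∑ m ∈ t, v m‖ ≤ C := by
  obtain ⟨N, hN⟩ := vanishing v x H 1 one_pos
  refine ⟨(∑ m ∈ Finset.range N, ‖v m‖) + 1, fun s => ?_⟩
  have hsplit : ∑ m ∈ s, v m
      = (∑ m ∈ s ∩ Finset.range N, v m) + ∑ m ∈ s \ Finset.range N, v m :=
    (Finset.sum_inter_add_sum_sdiff s (Finset.range N) v).symm
  rw [hsplit]
  refine le_trans (norm_add_le _ _) (add_le_add ?_ ?_)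
  · refine le_trans (norm_sum_le _ _) ?_
    exact Finset.sum_le_sum_of_subset_of_nonneg (Finset.inter_subset_right)
      (fun m _ _ => norm_nonneg _)
  · apply hN
    intro m hm
    have := (Finset.mem_sdiff.1 hm).2
    simpa using this
  
/-- Splitting by sign: bound on sums of `|g (w m)|` for `g = re` or `im`. -/
lemma sign_split {𝕂 : Type*} [RCLike 𝕂] (w : ℕ → 𝕂) (D : ℝ)
    (g : 𝕂 →+ ℝ) (hg : ∀ z : 𝕂, |g z| ≤ ‖z‖)
    (hD : ∀ s : Finset ℕ, ‖∑ m ∈ s, w m‖ ≤ D) (u : Finset ℕ) :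
    ∑ m ∈ u, |g (w m)| ≤ 2 * D := by
  classical
  have key : ∀ s : Finset ℕ, |g (∑ m ∈ s, w m)| ≤ D :=
    fun s => le_trans (hg _) (hD s)
  rw [← Finset.sum_filter_add_sum_filter_not u (fun m => 0 ≤ g (w m))]
  have h1 : ∑ m ∈ u.filter (fun m => 0 ≤ g (w m)), |g (w m)| ≤ D := by
    calc ∑ m ∈ u.filter (fun m => 0 ≤ g (w m)), |g (w m)|
        = ∑ m ∈ u.filter (fun m => 0 ≤ g (w m)), g (w m) := by
          apply Finset.sum_congr rfl
          intro m hm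
          exact abs_of_nonneg (Finset.mem_filter.1 hm).2
      _ = g (∑ m ∈ u.filter (fun m => 0 ≤ g (w m)), w m) := (map_sum g _ _).symm
      _ ≤ |g (∑ m ∈ u.filter (fun m => 0 ≤ g (w m)), w m)| := le_abs_self _
      _ ≤ D := key _
  have h2 : ∑ m ∈ u.filter (fun m => ¬ 0 ≤ g (w m)), |g (w m)| ≤ D := by
    calc ∑ m ∈ u.filter (fun m => ¬ 0 ≤ g (w m)), |g (w m)|
        = ∑ m ∈ u.filter (fun m => ¬ 0 ≤ g (w m)), -g (w m) := by
          apply Finset.sum_congr rfl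
          intro m hm
          exact abs_of_neg (lt_of_not_ge (Finset.mem_filter.1 hm).2)
      _ = -g (∑ m ∈ u.filter (fun m => ¬ 0 ≤ g (w m)), w m) := by
          rw [map_sum g, Finset.sum_neg_distrib]
      _ ≤ |g (∑ m ∈ u.filter (fun m => ¬ 0 ≤ g (w m)), w m)| := neg_le_abs _
      _ ≤ D := key _
  linarith

lemma norm_le_abs_re_add_abs_im {𝕂 : Type*} [RCLike 𝕂] (z : 𝕂) :
    ‖z‖ ≤ |RCLike.re z| + |RCLike.im z| := by
  have h := RCLike.re_add_im z
  calc ‖z‖ = ‖(RCLike.re z : 𝕂) + RCLike.im z * RCLike.I‖ := by rw [h]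
    _ ≤ ‖(RCLike.re z : 𝕂)‖ + ‖(RCLike.im z : 𝕂) * RCLike.I‖ := norm_add_le _ _
    _ ≤ |RCLike.re z| + |RCLike.im z| := by
        gcongr
        · rw [RCLike.norm_ofReal]
        · rw [norm_mul, RCLike.norm_ofReal]
          rcases RCLike.I_eq_zero_or_im_I_eq_one (K := 𝕂) with h | h
          · simp [h]
          · have : ‖(RCLike.I : 𝕂)‖ = 1 := by
              apply RCLike.norm_I_of_ne_zero
              intro h0
              rw [h0] at h
              simp at h
            rw [this, mul_one]

end USFBesselAux

/-- Every unconditional Schauder frame `𝓕 = ((a_m, b_m*))` of a Banach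
space `E` is a Besselian Schauder frame: there is `B > 0` such that
`∑_{m=1}^∞ |b_m*(x)| |f*(a_m)| ≤ B ‖x‖ ‖f*‖` for all `x ∈ E`, `f* ∈ E*`. -/
theorem usf_is_besselian
    {𝕂 : Type*} [RCLike 𝕂] {E : Type*} [NormedAddCommGroup E] [NormedSpace 𝕂 E]
    [CompleteSpace E] (a : ℕ → E) (b : ℕ → E →L[𝕂] 𝕂)
    (hF : IsUnconditionalSchauderFrame a b) :
    ∃ B : ℝ, 0 < B ∧ ∀ (x : E) (f : E →L[𝕂] 𝕂),
      Summable (fun m : ℕ => ‖b m x‖ * ‖f (a m)‖) ∧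
      ∑' m : ℕ, ‖b m x‖ * ‖f (a m)‖ ≤ B * ‖x‖ * ‖f‖ := by
  classical
  -- the finite-section operators
  set S : Finset ℕ → E →L[𝕂] E := fun s => ∑ m ∈ s, (b m).smulRight (a m) with hSdef
  have hS_apply : ∀ (s : Finset ℕ) (x : E), S s x = ∑ m ∈ s, b m x • a m := by
    intro s x
    simp [hSdef, ContinuousLinearMap.sum_apply]
  -- pointwise boundedness
  have hpt : ∀ x : E, ∃ C : ℝ, ∀ s : Finset ℕ, ‖S s x‖ ≤ C := by
    intro x
    obtain ⟨C, hC⟩ := USFBesselAux.bounded (fun m => b m x • a m) x (hF x)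
    exact ⟨C, fun s => by rw [hS_apply]; exact hC s⟩
  -- Banach–Steinhaus
  obtain ⟨C', hC'⟩ := banach_steinhaus hpt
  set C : ℝ := max C' 0 with hCdef
  refine ⟨4 * C + 1, by positivity, ?_⟩
  intro x f
  have hbound : ∀ s : Finset ℕ, ‖∑ m ∈ s, b m x • a m‖ ≤ C * ‖x‖ := by
    intro s
    rw [← hS_apply]
    calc ‖S s x‖ ≤ ‖S s‖ * ‖x‖ := (S s).le_opNorm x
      _ ≤ C * ‖x‖ := by
          apply mul_le_mul_of_nonneg_right _ (norm_nonneg x)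
          exact le_trans (hC' s) (le_max_left _ _)
  -- the scalar sequence
  set w : ℕ → 𝕂 := fun m => f (b m x • a m) with hwdef
  have hwD : ∀ s : Finset ℕ, ‖∑ m ∈ s, w m‖ ≤ ‖f‖ * (C * ‖x‖) := by
    intro s
    have : ∑ m ∈ s, w m = f (∑ m ∈ s, b m x • a m) := by
      rw [map_sum]
    rw [this]
    calc ‖f (∑ m ∈ s, b m x • a m)‖ ≤ ‖f‖ * ‖∑ m ∈ s, b m x • a m‖ := f.le_opNorm _
      _ ≤ ‖f‖ * (C * ‖x‖) := by
          exact mul_le_mul_of_nonneg_left (hbound s) (norm_nonneg f)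
  have hterm : ∀ m : ℕ, ‖b m x‖ * ‖f (a m)‖ = ‖w m‖ := by
    intro m
    simp only [hwdef, map_smul, smul_eq_mul, norm_mul]
  have hre := USFBesselAux.sign_split w (‖f‖ * (C * ‖x‖))
    (RCLike.re (K := 𝕂)) (fun z => RCLike.abs_re_le_norm z) hwD
  have him := USFBesselAux.sign_split w (‖f‖ * (C * ‖x‖))
    (RCLike.im (K := 𝕂)) (fun z => RCLike.abs_im_le_norm z) hwD
  have hkey : ∀ u : Finset ℕ, ∑ m ∈ u, ‖b m x‖ * ‖f (a m)‖ ≤ (4 * C + 1) * ‖x‖ * ‖f‖ := by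
    intro u
    have h1 : ∑ m ∈ u, ‖b m x‖ * ‖f (a m)‖ ≤
        (∑ m ∈ u, |RCLike.re (w m)|) + ∑ m ∈ u, |RCLike.im (w m)| := by
      rw [← Finset.sum_add_distrib]
      apply Finset.sum_le_sum
      intro m _
      rw [hterm m]
      exact USFBesselAux.norm_le_abs_re_add_abs_im (w m)
    have h2 := hre u
    have h3 := him u
    have hC0 : 0 ≤ C := le_max_right _ _
    have hfx : 0 ≤ ‖f‖ * (C * ‖x‖) := by positivity
    have : (4 : ℝ) * (‖f‖ * (C * ‖x‖)) ≤ (4 * C + 1) * ‖x‖ * ‖f‖ := by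
      have hx0 : 0 ≤ ‖x‖ := norm_nonneg x
      have hf0 : 0 ≤ ‖f‖ := norm_nonneg f
      nlinarith
    linarith
  have hsummable : Summable (fun m : ℕ => ‖b m x‖ * ‖f (a m)‖) := by
    apply summable_of_sum_le (c := (4 * C + 1) * ‖x‖ * ‖f‖)
    · intro m
      positivity
    · exact hkey
  exact ⟨hsummable, Summable.tsum_le_of_sum_le hsummable hkey⟩
end

section
/- Let E be a Banach space and 𝓕 = ((a_m, b_m*))_{m≥1} a Besselian Schauder frame for E with Besselian constant L_𝓕. Then the map x ↦ ‖x‖^Bess_{E,𝓕} := sup_{‖f*‖_{E*} ≤ 1} ∑_{m=1}^∞ |b_m*(x) f*(a_m)| is a norm on E equivalent to the original norm, and satisfies ‖x‖_E ≤ ‖x‖^Bess_{E,𝓕} ≤ L_𝓕 ‖x‖_E for every x ∈ E. -/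
open Filter Finset

variable {𝕂 : Type*} [RCLike 𝕂] {E : Type*} [NormedAddCommGroup E] [NormedSpace 𝕂 E]

/-- `((a_m, b_m*))` is a Schauder frame for `E`: `x = ∑ b_m*(x) a_m` for all `x`. -/
def IsSchauderFrame (a : ℕ → E) (b : ℕ → E →L[𝕂] 𝕂) : Prop :=
  ∀ x : E, Tendsto (fun M : ℕ => ∑ m ∈ Finset.range M, b m x • a m) atTop (nhds x)

/-- `((a_m, b_m*))` is a Besselian Schauder frame for `E`. -/
def IsBesselianSchauderFrame (a : ℕ → E) (b : ℕ → E →L[𝕂] 𝕂) : Prop :=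
  IsSchauderFrame a b ∧
    ∃ B : ℝ, 0 < B ∧ ∀ (x : E) (f : E →L[𝕂] 𝕂),
      Summable (fun m : ℕ => ‖b m x‖ * ‖f (a m)‖) ∧
      ∑' m : ℕ, ‖b m x‖ * ‖f (a m)‖ ≤ B * ‖x‖ * ‖f‖

/-- The Besselian constant `L_𝓕` of the frame `𝓕 = ((a_m, b_m*))`. -/
noncomputable def besselianConst (a : ℕ → E) (b : ℕ → E →L[𝕂] 𝕂) : ℝ :=
  ⨆ p : {x : E // ‖x‖ ≤ 1} × {f : E →L[𝕂] 𝕂 // ‖f‖ ≤ 1},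
    ∑' m : ℕ, ‖b m p.1.1‖ * ‖p.2.1 (a m)‖

/-- The Besselian norm `‖x‖^Bess_{E,𝓕} = sup_{‖f*‖ ≤ 1} ∑_m |b_m*(x) f*(a_m)|`. -/
noncomputable def bessNorm (a : ℕ → E) (b : ℕ → E →L[𝕂] 𝕂) (x : E) : ℝ :=
  ⨆ f : {f : E →L[𝕂] 𝕂 // ‖f‖ ≤ 1}, ∑' m : ℕ, ‖b m x‖ * ‖f.1 (a m)‖

/-
Testing the Schauder expansion `x = ∑ b_m*(x) a_m` against a norming functional `f*` gives
`‖x‖ = |f*(x)| ≤ ∑ |b_m*(x)| |f*(a_m)|`, the lower bound. The triangle inequality and homogeneity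
hold termwise in each sum, and the upper bound follows by rescaling `x` into the unit ball, where
every sum is bounded by `L_𝓕`.
-/

section BessNorm

variable (a : ℕ → E) (b : ℕ → E →L[𝕂] 𝕂)

instance : Nonempty {f : E →L[𝕂] 𝕂 // ‖f‖ ≤ 1} := ⟨⟨0, by simp⟩⟩

theorem tsum_norm_apply_smul_mul (c : 𝕂) (x : E) (f : E →L[𝕂] 𝕂) :
    ∑' m, ‖b m (c • x)‖ * ‖f (a m)‖ = ‖c‖ * ∑' m, ‖b m x‖ * ‖f (a m)‖ := by
  rw [← tsum_mul_left]
  refine tsum_congr fun m => ?_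
  rw [map_smul, smul_eq_mul, norm_mul, mul_assoc]

theorem bessNorm_smul (c : 𝕂) (x : E) : bessNorm a b (c • x) = ‖c‖ * bessNorm a b x := by
  simp only [bessNorm, Real.mul_iSup_of_nonneg (norm_nonneg c), tsum_norm_apply_smul_mul]

theorem bessNorm_zero : bessNorm a b 0 = 0 := by
  simp [bessNorm]

variable {a b}

theorem IsSchauderFrame.norm_apply_le_tsum (hF : IsSchauderFrame a b) (f : E →L[𝕂] 𝕂) (x : E)
    (hs : Summable fun m => ‖b m x‖ * ‖f (a m)‖) :
    ‖f x‖ ≤ ∑' m, ‖b m x‖ * ‖f (a m)‖ := by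
  have hs' : Summable fun m => ‖b m x * f (a m)‖ := by simpa only [norm_mul] using hs
  have hsum : HasSum (fun m => b m x * f (a m)) (f x) := by
    rw [hasSum_iff_tendsto_nat_of_summable_norm hs']
    simpa [Function.comp_def, map_sum, map_smul] using (f.continuous.tendsto x).comp (hF x)
  simpa only [hsum.tsum_eq, norm_mul] using norm_tsum_le_tsum_norm hs'

namespace IsBesselianSchauderFrame

variable (hF : IsBesselianSchauderFrame a b)
include hF

theorem summable (x : E) (f : E →L[𝕂] 𝕂) : Summable fun m => ‖b m x‖ * ‖f (a m)‖ :=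
  let ⟨_, _, hbd⟩ := hF.2
  (hbd x f).1

theorem exists_tsum_le_mul_norm :
    ∃ B, 0 ≤ B ∧ ∀ (x : E) (f : E →L[𝕂] 𝕂), ‖f‖ ≤ 1 → ∑' m, ‖b m x‖ * ‖f (a m)‖ ≤ B * ‖x‖ := by
  obtain ⟨B, hB, hbd⟩ := hF.2
  refine ⟨B, hB.le, fun x f hf => (hbd x f).2.trans ?_⟩
  calc B * ‖x‖ * ‖f‖ ≤ B * ‖x‖ * 1 := by gcongr
    _ = B * ‖x‖ := mul_one _

theorem bddAbove_tsum (x : E) :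
    BddAbove (Set.range fun f : {f : E →L[𝕂] 𝕂 // ‖f‖ ≤ 1} => ∑' m, ‖b m x‖ * ‖f.1 (a m)‖) := by
  obtain ⟨B, -, hB⟩ := hF.exists_tsum_le_mul_norm
  exact ⟨B * ‖x‖, by rintro _ ⟨f, rfl⟩; exact hB x f f.2⟩

theorem bddAbove_tsum_unitBall :
    BddAbove (Set.range fun p : {x : E // ‖x‖ ≤ 1} × {f : E →L[𝕂] 𝕂 // ‖f‖ ≤ 1} =>
      ∑' m, ‖b m p.1.1‖ * ‖p.2.1 (a m)‖) := by
  obtain ⟨B, hB₀, hB⟩ := hF.exists_tsum_le_mul_norm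
  refine ⟨B, ?_⟩
  rintro _ ⟨⟨x, f⟩, rfl⟩
  calc _ ≤ B * ‖x.1‖ := hB x f f.2
    _ ≤ B * 1 := by gcongr; exact x.2
    _ = B := mul_one B

theorem tsum_le_bessNorm (x : E) {f : E →L[𝕂] 𝕂} (hf : ‖f‖ ≤ 1) :
    ∑' m, ‖b m x‖ * ‖f (a m)‖ ≤ bessNorm a b x :=
  le_ciSup (f := fun f : {f : E →L[𝕂] 𝕂 // ‖f‖ ≤ 1} => ∑' m, ‖b m x‖ * ‖f.1 (a m)‖)
    (hF.bddAbove_tsum x) ⟨f, hf⟩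

theorem bessNorm_add_le (x y : E) : bessNorm a b (x + y) ≤ bessNorm a b x + bessNorm a b y := by
  refine ciSup_le fun f => ?_
  have hx := hF.summable x f.1
  have hy := hF.summable y f.1
  calc ∑' m, ‖b m (x + y)‖ * ‖f.1 (a m)‖
      ≤ ∑' m, (‖b m x‖ * ‖f.1 (a m)‖ + ‖b m y‖ * ‖f.1 (a m)‖) := by
        refine (hF.summable (x + y) f.1).tsum_le_tsum (fun m => ?_) (hx.add hy)
        rw [map_add, ← add_mul]
        gcongr
        exact norm_add_le _ _
    _ = ∑' m, ‖b m x‖ * ‖f.1 (a m)‖ + ∑' m, ‖b m y‖ * ‖f.1 (a m)‖ := hx.tsum_add hy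
    _ ≤ bessNorm a b x + bessNorm a b y :=
        add_le_add (hF.tsum_le_bessNorm x f.2) (hF.tsum_le_bessNorm y f.2)

theorem norm_le_bessNorm (x : E) : ‖x‖ ≤ bessNorm a b x := by
  rcases eq_or_ne x 0 with rfl | hx
  · simp [bessNorm_zero]
  obtain ⟨f, hf, hfx⟩ := exists_dual_vector 𝕂 x (norm_ne_zero_iff.mpr hx)
  calc ‖x‖ = ‖f x‖ := by simp [hfx]
    _ ≤ ∑' m, ‖b m x‖ * ‖f (a m)‖ := hF.1.norm_apply_le_tsum f x (hF.summable x f)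
    _ ≤ bessNorm a b x := hF.tsum_le_bessNorm x hf.le

theorem bessNorm_le_besselianConst {u : E} (hu : ‖u‖ ≤ 1) :
    bessNorm a b u ≤ besselianConst a b :=
  ciSup_le fun f => le_ciSup hF.bddAbove_tsum_unitBall (⟨u, hu⟩, f)

theorem bessNorm_le_besselianConst_mul_norm (x : E) :
    bessNorm a b x ≤ besselianConst a b * ‖x‖ := by
  rcases eq_or_ne x 0 with rfl | hx
  · simp [bessNorm_zero]
  have hxu : x = (‖x‖ : 𝕂) • (‖x‖⁻¹ : 𝕂) • x := by
    rw [smul_smul, mul_inv_cancel₀ (by simpa using hx), one_smul]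
  calc bessNorm a b x = ‖x‖ * bessNorm a b ((‖x‖⁻¹ : 𝕂) • x) := by
        conv_lhs => rw [hxu, bessNorm_smul, RCLike.norm_ofReal, abs_norm]
    _ ≤ ‖x‖ * besselianConst a b := by
        gcongr
        exact hF.bessNorm_le_besselianConst (norm_smul_inv_norm (𝕜 := 𝕂) hx).le
    _ = besselianConst a b * ‖x‖ := mul_comm _ _

end IsBesselianSchauderFrame

end BessNorm

theorem bessNorm_is_equivalent_norm_general
    (a : ℕ → E) (b : ℕ → E →L[𝕂] 𝕂) (hF : IsBesselianSchauderFrame a b) :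
    (∀ x y : E, bessNorm a b (x + y) ≤ bessNorm a b x + bessNorm a b y) ∧
    (∀ (c : 𝕂) (x : E), bessNorm a b (c • x) = ‖c‖ * bessNorm a b x) ∧
    (∀ x : E, bessNorm a b x = 0 ↔ x = 0) ∧
    (∀ x : E, ‖x‖ ≤ bessNorm a b x ∧ bessNorm a b x ≤ besselianConst a b * ‖x‖) := by
  refine ⟨hF.bessNorm_add_le, bessNorm_smul a b, fun x => ⟨fun h => ?_, ?_⟩,
    fun x => ⟨hF.norm_le_bessNorm x, hF.bessNorm_le_besselianConst_mul_norm x⟩⟩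
  · exact norm_le_zero_iff.mp (h ▸ hF.norm_le_bessNorm x)
  · rintro rfl
    exact bessNorm_zero a b

/-- If `𝓕 = ((a_m, b_m*))` is a Besselian Schauder frame for a Banach
space `E` with Besselian constant `L_𝓕`, then `‖·‖^Bess_{E,𝓕}` is a norm on `E`,
equivalent to the original norm: `‖x‖ ≤ ‖x‖^Bess ≤ L_𝓕 ‖x‖` for all `x`. -/
theorem bessNorm_is_equivalent_norm [CompleteSpace E]
    (a : ℕ → E) (b : ℕ → E →L[𝕂] 𝕂) (hF : IsBesselianSchauderFrame a b) :
    (∀ x y : E, bessNorm a b (x + y) ≤ bessNorm a b x + bessNorm a b y) ∧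
    (∀ (c : 𝕂) (x : E), bessNorm a b (c • x) = ‖c‖ * bessNorm a b x) ∧
    (∀ x : E, bessNorm a b x = 0 ↔ x = 0) ∧
    (∀ x : E, ‖x‖ ≤ bessNorm a b x ∧ bessNorm a b x ≤ besselianConst a b * ‖x‖) :=
  bessNorm_is_equivalent_norm_general a b hF
end

section
/- Let E, F be Banach spaces with Besselian Schauder frames 𝓕 = ((a_m, b_m*)) and 𝓖 = ((x_n, y_n*)), with Besselian constants L_𝓕, L_𝓖. Let ε_{𝓕,𝓖} and π_{𝓕,𝓖} denote respectively the injective and projective tensor norms on the algebraic tensor product E ⊗ F formed with respect to the Besselian norms ‖·‖^Bess_{E,𝓕} and ‖·‖^Bess_{F,𝓖}. Then for every u ∈ E ⊗ F: L_𝓕^{-1} L_𝓖^{-1} ε_{𝓕,𝓖}(u) ≤ α^Bess_{𝓕,𝓖}(u) ≤ π_{𝓕,𝓖}(u). -/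
open Filter Finset TensorProduct

variable {𝕂 : Type*} [RCLike 𝕂]
variable {E : Type*} [NormedAddCommGroup E] [NormedSpace 𝕂 E]
variable {F : Type*} [NormedAddCommGroup F] [NormedSpace 𝕂 F]

/-- `((a_m, b_m*))` is an unconditional Schauder basis of `E` (together with its
biorthogonal coefficient functionals): `b_i*(a_j) = δ_{i,j}` and every `x` is the
unconditional sum `∑ b_m*(x) a_m`. -/
def IsUnconditionalSchauderBasis (a : ℕ → E) (b : ℕ → E →L[𝕂] 𝕂) : Prop :=
  (∀ i j : ℕ, b i (a j) = if i = j then 1 else 0) ∧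
    ∀ x : E, ∀ σ : Equiv.Perm ℕ,
      Tendsto (fun M : ℕ => ∑ m ∈ Finset.range M, b (σ m) x • a (σ m)) atTop (nhds x)

/-- The dual norm on `E*` induced by the Besselian norm. -/
noncomputable def bessDualNorm (a : ℕ → E) (b : ℕ → E →L[𝕂] 𝕂) (f : E →L[𝕂] 𝕂) : ℝ :=
  ⨆ x : {x : E // bessNorm a b x ≤ 1}, ‖f x.1‖

/-- The functional `f* ⊗ g*` on the algebraic tensor product:
`(f* ⊗ g*)(∑ x^r ⊗ y^r) = ∑ f*(x^r) g*(y^r)`. -/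
noncomputable def dualPair (f : E →L[𝕂] 𝕂) (g : F →L[𝕂] 𝕂) : E ⊗[𝕂] F →ₗ[𝕂] 𝕂 :=
  TensorProduct.lift (((LinearMap.mul 𝕂 𝕂).compl₂ g.toLinearMap).comp f.toLinearMap)

/-- The quantity `Bess(∑_{r<R} x^r ⊗ y^r)` attached to a finite representation. -/
noncomputable def bessRep (a : ℕ → E) (b : ℕ → E →L[𝕂] 𝕂)
    (c : ℕ → F) (d : ℕ → F →L[𝕂] 𝕂) (R : ℕ) (x : ℕ → E) (y : ℕ → F) : ℝ :=
  ⨆ fg : {f : E →L[𝕂] 𝕂 // ‖f‖ ≤ 1} × {g : F →L[𝕂] 𝕂 // ‖g‖ ≤ 1},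
    ∑ r ∈ Finset.range R, ∑' mn : ℕ × ℕ,
      ‖b mn.1 (x r)‖ * ‖d mn.2 (y r)‖ * ‖fg.1.1 (a mn.1)‖ * ‖fg.2.1 (c mn.2)‖

/-- The Besselian crossnorm `α^Bess_{𝓕,𝓖}` on `E ⊗ F`. -/
noncomputable def alphaBess (a : ℕ → E) (b : ℕ → E →L[𝕂] 𝕂)
    (c : ℕ → F) (d : ℕ → F →L[𝕂] 𝕂) (u : E ⊗[𝕂] F) : ℝ :=
  sInf {t : ℝ | ∃ (R : ℕ) (x : ℕ → E) (y : ℕ → F),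
    u = ∑ r ∈ Finset.range R, x r ⊗ₜ[𝕂] y r ∧ t = bessRep a b c d R x y}

/-- The injective tensor norm on `E ⊗ F` formed with respect to the Besselian norms. -/
noncomputable def injNormBess (a : ℕ → E) (b : ℕ → E →L[𝕂] 𝕂)
    (c : ℕ → F) (d : ℕ → F →L[𝕂] 𝕂) (u : E ⊗[𝕂] F) : ℝ :=
  ⨆ fg : {f : E →L[𝕂] 𝕂 // bessDualNorm a b f ≤ 1} ×
      {g : F →L[𝕂] 𝕂 // bessDualNorm c d g ≤ 1},
    ‖dualPair fg.1.1 fg.2.1 u‖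

/-- The projective tensor norm on `E ⊗ F` formed with respect to the Besselian norms. -/
noncomputable def projNormBess (a : ℕ → E) (b : ℕ → E →L[𝕂] 𝕂)
    (c : ℕ → F) (d : ℕ → F →L[𝕂] 𝕂) (u : E ⊗[𝕂] F) : ℝ :=
  sInf {t : ℝ | ∃ (R : ℕ) (x : ℕ → E) (y : ℕ → F),
    u = ∑ r ∈ Finset.range R, x r ⊗ₜ[𝕂] y r ∧
    t = ∑ r ∈ Finset.range R, bessNorm a b (x r) * bessNorm c d (y r)}

/-! ### Auxiliary lemmas -/

section Aux

lemma myTsum_smul_left (a : ℕ → E) (b : ℕ → E →L[𝕂] 𝕂) (t : ℝ) (x : E) (f : E →L[𝕂] 𝕂) :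
    ∑' m : ℕ, ‖b m ((t : 𝕂) • x)‖ * ‖f (a m)‖ = |t| * ∑' m : ℕ, ‖b m x‖ * ‖f (a m)‖ := by
  rw [← tsum_mul_left]
  congr 1
  funext m
  rw [map_smul, smul_eq_mul, norm_mul, RCLike.norm_ofReal, mul_assoc]

lemma myTsum_smul_right (a : ℕ → E) (b : ℕ → E →L[𝕂] 𝕂) (t : ℝ) (x : E) (f : E →L[𝕂] 𝕂) :
    ∑' m : ℕ, ‖b m x‖ * ‖((t : 𝕂) • f) (a m)‖ = |t| * ∑' m : ℕ, ‖b m x‖ * ‖f (a m)‖ := by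
  rw [← tsum_mul_left]
  congr 1
  funext m
  rw [ContinuousLinearMap.smul_apply, smul_eq_mul, norm_mul, RCLike.norm_ofReal]
  ring

lemma myNormSmulCLM (t : ℝ) (f : E →L[𝕂] 𝕂) : ‖((t : 𝕂)) • f‖ = |t| * ‖f‖ := by
  have h : ∀ s : 𝕂, ‖s • f‖ = ‖s‖ * ‖f‖ := fun s => norm_smul s f
  rw [h ((t : 𝕂)), RCLike.norm_ofReal]

lemma myUnitCLM {f : E →L[𝕂] 𝕂} (hf : ‖f‖ ≠ 0) : ‖((‖f‖⁻¹ : ℝ) : 𝕂) • f‖ ≤ 1 := by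
  rw [myNormSmulCLM, abs_inv, abs_norm, inv_mul_cancel₀ hf]

lemma myConstBdd (a : ℕ → E) (b : ℕ → E →L[𝕂] 𝕂) (hF : IsBesselianSchauderFrame a b) :
    BddAbove (Set.range fun p : {x : E // ‖x‖ ≤ 1} × {f : E →L[𝕂] 𝕂 // ‖f‖ ≤ 1} =>
      ∑' m : ℕ, ‖b m p.1.1‖ * ‖p.2.1 (a m)‖) := by
  obtain ⟨B, hB0, hB⟩ := hF.2
  refine ⟨B, ?_⟩
  rintro t ⟨p, rfl⟩
  have h := (hB p.1.1 p.2.1).2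
  have h1 := p.1.2
  have h2 := p.2.2
  show ∑' m : ℕ, ‖b m p.1.1‖ * ‖p.2.1 (a m)‖ ≤ B
  nlinarith [norm_nonneg p.1.1, norm_nonneg p.2.1, hB0.le,
    mul_le_mul h1 h2 (norm_nonneg p.2.1) zero_le_one]

lemma myConstNonneg (a : ℕ → E) (b : ℕ → E →L[𝕂] 𝕂) : 0 ≤ besselianConst a b :=
  Real.iSup_nonneg fun _ => tsum_nonneg fun _ => mul_nonneg (norm_nonneg _) (norm_nonneg _)

lemma myTsumLe (a : ℕ → E) (b : ℕ → E →L[𝕂] 𝕂) (hF : IsBesselianSchauderFrame a b)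
    (x : E) (f : E →L[𝕂] 𝕂) :
    ∑' m : ℕ, ‖b m x‖ * ‖f (a m)‖ ≤ besselianConst a b * ‖x‖ * ‖f‖ := by
  rcases eq_or_ne x 0 with rfl | hx
  · simp
  rcases eq_or_ne f 0 with rfl | hf
  · simp
  have hx' : ‖x‖ ≠ 0 := norm_ne_zero_iff.2 hx
  have hf' : ‖f‖ ≠ 0 := norm_ne_zero_iff.2 hf
  have hx1n : ‖((‖x‖⁻¹ : ℝ) : 𝕂) • x‖ ≤ 1 := by
    rw [norm_smul, RCLike.norm_ofReal, abs_inv, abs_norm, inv_mul_cancel₀ hx']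
  have hf1n : ‖((‖f‖⁻¹ : ℝ) : 𝕂) • f‖ ≤ 1 := myUnitCLM hf'
  have key : ∑' m : ℕ, ‖b m (((‖x‖⁻¹ : ℝ) : 𝕂) • x)‖ * ‖(((‖f‖⁻¹ : ℝ) : 𝕂) • f) (a m)‖ ≤
      besselianConst a b :=
    le_ciSup (myConstBdd a b hF)
      (⟨⟨((‖x‖⁻¹ : ℝ) : 𝕂) • x, hx1n⟩, ⟨((‖f‖⁻¹ : ℝ) : 𝕂) • f, hf1n⟩⟩ :
        {x : E // ‖x‖ ≤ 1} × {f : E →L[𝕂] 𝕂 // ‖f‖ ≤ 1})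
  rw [myTsum_smul_left, myTsum_smul_right] at key
  simp only [abs_inv, abs_norm] at key
  have hxp : (0:ℝ) < ‖x‖ := lt_of_le_of_ne (norm_nonneg x) (Ne.symm hx')
  have hfp : (0:ℝ) < ‖f‖ := lt_of_le_of_ne (norm_nonneg f) (Ne.symm hf')
  calc ∑' m : ℕ, ‖b m x‖ * ‖f (a m)‖
      = (‖x‖ * ‖f‖) * (‖x‖⁻¹ * (‖f‖⁻¹ * ∑' m : ℕ, ‖b m x‖ * ‖f (a m)‖)) := by
        field_simp
    _ ≤ (‖x‖ * ‖f‖) * besselianConst a b :=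
        mul_le_mul_of_nonneg_left key (by positivity)
    _ = besselianConst a b * ‖x‖ * ‖f‖ := by ring

lemma myBessNormNonneg (a : ℕ → E) (b : ℕ → E →L[𝕂] 𝕂) (x : E) : 0 ≤ bessNorm a b x :=
  Real.iSup_nonneg fun _ => tsum_nonneg fun _ => mul_nonneg (norm_nonneg _) (norm_nonneg _)

lemma myTsumLe1 (a : ℕ → E) (b : ℕ → E →L[𝕂] 𝕂) (hF : IsBesselianSchauderFrame a b)
    (x : E) {f : E →L[𝕂] 𝕂} (hf : ‖f‖ ≤ 1) :
    ∑' m : ℕ, ‖b m x‖ * ‖f (a m)‖ ≤ besselianConst a b * ‖x‖ :=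
  (myTsumLe a b hF x f).trans
    (mul_le_of_le_one_right (mul_nonneg (myConstNonneg a b) (norm_nonneg x)) hf)

lemma myBessNormBdd (a : ℕ → E) (b : ℕ → E →L[𝕂] 𝕂) (hF : IsBesselianSchauderFrame a b)
    (x : E) :
    BddAbove (Set.range fun f : {f : E →L[𝕂] 𝕂 // ‖f‖ ≤ 1} =>
      ∑' m : ℕ, ‖b m x‖ * ‖f.1 (a m)‖) := by
  refine ⟨besselianConst a b * ‖x‖, ?_⟩
  rintro t ⟨f, rfl⟩
  exact myTsumLe1 a b hF x f.2

lemma myBessNormLe (a : ℕ → E) (b : ℕ → E →L[𝕂] 𝕂) (hF : IsBesselianSchauderFrame a b)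
    (x : E) : bessNorm a b x ≤ besselianConst a b * ‖x‖ :=
  Real.iSup_le (fun f => myTsumLe1 a b hF x f.2)
    (mul_nonneg (myConstNonneg a b) (norm_nonneg x))

lemma myApplyEqTsum (a : ℕ → E) (b : ℕ → E →L[𝕂] 𝕂) (hF : IsBesselianSchauderFrame a b)
    (x : E) (f : E →L[𝕂] 𝕂) : f x = ∑' m : ℕ, b m x * f (a m) := by
  obtain ⟨B, hB0, hB⟩ := hF.2
  have hsn : Summable fun m : ℕ => ‖b m x * f (a m)‖ := by
    simpa [norm_mul] using (hB x f).1
  have hs : Summable fun m : ℕ => b m x * f (a m) := hsn.of_norm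
  have h2 : Tendsto (fun M : ℕ => f (∑ m ∈ Finset.range M, b m x • a m)) atTop (nhds (f x)) :=
    (f.continuous.tendsto x).comp (hF.1 x)
  have h3 : (fun M : ℕ => f (∑ m ∈ Finset.range M, b m x • a m)) =
      fun M : ℕ => ∑ m ∈ Finset.range M, b m x * f (a m) := by
    funext M
    rw [map_sum]
    exact Finset.sum_congr rfl fun m _ => by rw [map_smul, smul_eq_mul]
  rw [h3] at h2
  exact tendsto_nhds_unique h2 hs.hasSum.tendsto_sum_nat

lemma myNormApplyLe (a : ℕ → E) (b : ℕ → E →L[𝕂] 𝕂) (hF : IsBesselianSchauderFrame a b)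
    (x : E) (f : E →L[𝕂] 𝕂) : ‖f x‖ ≤ ∑' m : ℕ, ‖b m x‖ * ‖f (a m)‖ := by
  obtain ⟨B, hB0, hB⟩ := hF.2
  have hsn : Summable fun m : ℕ => ‖b m x * f (a m)‖ := by
    simpa [norm_mul] using (hB x f).1
  rw [myApplyEqTsum a b hF x f]
  calc ‖∑' m : ℕ, b m x * f (a m)‖ ≤ ∑' m : ℕ, ‖b m x * f (a m)‖ := norm_tsum_le_tsum_norm hsn
    _ = ∑' m : ℕ, ‖b m x‖ * ‖f (a m)‖ := by simp [norm_mul]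

lemma myNormLeBessNorm (a : ℕ → E) (b : ℕ → E →L[𝕂] 𝕂) (hF : IsBesselianSchauderFrame a b)
    (x : E) : ‖x‖ ≤ bessNorm a b x := by
  refine NormedSpace.norm_le_dual_bound 𝕂 x (myBessNormNonneg a b x) fun f => ?_
  rcases eq_or_ne f 0 with rfl | hf
  · simp
  have hfn : ‖f‖ ≠ 0 := norm_ne_zero_iff.2 hf
  have hf1n : ‖((‖f‖⁻¹ : ℝ) : 𝕂) • f‖ ≤ 1 := myUnitCLM hfn
  have h3 : ∑' m : ℕ, ‖b m x‖ * ‖(((‖f‖⁻¹ : ℝ) : 𝕂) • f) (a m)‖ ≤ bessNorm a b x :=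
    le_ciSup (myBessNormBdd a b hF x) (⟨((‖f‖⁻¹ : ℝ) : 𝕂) • f, hf1n⟩ :
      {f : E →L[𝕂] 𝕂 // ‖f‖ ≤ 1})
  rw [myTsum_smul_right, abs_inv, abs_norm] at h3
  have h4 := mul_le_mul_of_nonneg_left h3 (norm_nonneg f)
  rw [← mul_assoc, mul_inv_cancel₀ hfn, one_mul] at h4
  exact (myNormApplyLe a b hF x f).trans (h4.trans_eq (mul_comm _ _))

lemma myBessNormSmulLe (a : ℕ → E) (b : ℕ → E →L[𝕂] 𝕂) (hF : IsBesselianSchauderFrame a b)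
    (t : ℝ) (x : E) : bessNorm a b ((t : 𝕂) • x) ≤ |t| * bessNorm a b x := by
  refine Real.iSup_le (fun f => ?_) (mul_nonneg (abs_nonneg t) (myBessNormNonneg a b x))
  rw [myTsum_smul_left]
  exact mul_le_mul_of_nonneg_left (le_ciSup (myBessNormBdd a b hF x) f) (abs_nonneg t)

lemma myApplyLeBessNorm (a : ℕ → E) (b : ℕ → E →L[𝕂] 𝕂) (hF : IsBesselianSchauderFrame a b)
    {f : E →L[𝕂] 𝕂} (hf : bessDualNorm a b f ≤ 1) (x : E) : ‖f x‖ ≤ bessNorm a b x := by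
  rcases eq_or_lt_of_le (myBessNormNonneg a b x) with h0 | hpos
  · have hx0 : x = 0 := by
      have h1 := myNormLeBessNorm a b hF x
      exact norm_le_zero_iff.1 (h1.trans_eq h0.symm)
    simpa [hx0] using myBessNormNonneg a b (0 : E)
  have hs0 : bessNorm a b x ≠ 0 := hpos.ne'
  have hx1b' : bessNorm a b ((((bessNorm a b x)⁻¹ : ℝ) : 𝕂) • x) ≤ 1 := by
    have h := myBessNormSmulLe a b hF (bessNorm a b x)⁻¹ x
    rwa [abs_of_nonneg (inv_nonneg.2 hpos.le), inv_mul_cancel₀ hs0] at h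
  have hbdd : BddAbove (Set.range fun z : {x : E // bessNorm a b x ≤ 1} => ‖f z.1‖) := by
    refine ⟨‖f‖, ?_⟩
    rintro t ⟨z, rfl⟩
    calc ‖f z.1‖ ≤ ‖f‖ * ‖z.1‖ := f.le_opNorm z.1
      _ ≤ ‖f‖ * 1 :=
        mul_le_mul_of_nonneg_left ((myNormLeBessNorm a b hF z.1).trans z.2) (norm_nonneg f)
      _ = ‖f‖ := mul_one _
  have hfx1 : ‖f ((((bessNorm a b x)⁻¹ : ℝ) : 𝕂) • x)‖ ≤ 1 :=
    (le_ciSup hbdd (⟨(((bessNorm a b x)⁻¹ : ℝ) : 𝕂) • x, hx1b'⟩ :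
      {x : E // bessNorm a b x ≤ 1})).trans hf
  have hsx : x = ((bessNorm a b x : ℝ) : 𝕂) • ((((bessNorm a b x)⁻¹ : ℝ) : 𝕂) • x) := by
    rw [smul_smul, ← RCLike.ofReal_mul, mul_inv_cancel₀ hs0, RCLike.ofReal_one, one_smul]
  have heq : ‖f x‖ = bessNorm a b x * ‖f ((((bessNorm a b x)⁻¹ : ℝ) : 𝕂) • x)‖ := by
    conv_lhs => rw [hsx]
    rw [map_smul, norm_smul, RCLike.norm_ofReal, abs_of_nonneg hpos.le]
  rw [heq]
  calc bessNorm a b x * ‖f ((((bessNorm a b x)⁻¹ : ℝ) : 𝕂) • x)‖ ≤ bessNorm a b x * 1 :=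
      mul_le_mul_of_nonneg_left hfx1 hpos.le
    _ = bessNorm a b x := mul_one _

lemma myOpNormLe (a : ℕ → E) (b : ℕ → E →L[𝕂] 𝕂) (hF : IsBesselianSchauderFrame a b)
    {f : E →L[𝕂] 𝕂} (hf : bessDualNorm a b f ≤ 1) : ‖f‖ ≤ besselianConst a b :=
  f.opNorm_le_bound (myConstNonneg a b) fun x =>
    (myApplyLeBessNorm a b hF hf x).trans (myBessNormLe a b hF x)

lemma myTsumProd {A B : ℕ → ℝ} (hA : Summable A) (hB : Summable B)
    (hA0 : ∀ n, 0 ≤ A n) (hB0 : ∀ n, 0 ≤ B n) :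
    ∑' mn : ℕ × ℕ, A mn.1 * B mn.2 = (∑' m, A m) * (∑' n, B n) := by
  have hs := hA.mul_of_nonneg hB hA0 hB0
  rw [Summable.tsum_prod' hs (fun m => hB.mul_left (A m))]
  simp_rw [tsum_mul_left]
  rw [tsum_mul_right]

lemma myTsumMN (a : ℕ → E) (b : ℕ → E →L[𝕂] 𝕂) (c : ℕ → F) (d : ℕ → F →L[𝕂] 𝕂)
    (hF : IsBesselianSchauderFrame a b) (hG : IsBesselianSchauderFrame c d)
    (x : E) (y : F) (f : E →L[𝕂] 𝕂) (g : F →L[𝕂] 𝕂) :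
    ∑' mn : ℕ × ℕ, ‖b mn.1 x‖ * ‖d mn.2 y‖ * ‖f (a mn.1)‖ * ‖g (c mn.2)‖
      = (∑' m : ℕ, ‖b m x‖ * ‖f (a m)‖) * (∑' n : ℕ, ‖d n y‖ * ‖g (c n)‖) := by
  obtain ⟨B, _, hB⟩ := hF.2
  obtain ⟨C, _, hC⟩ := hG.2
  have h := myTsumProd (A := fun m => ‖b m x‖ * ‖f (a m)‖) (B := fun n => ‖d n y‖ * ‖g (c n)‖)
    (hB x f).1 (hC y g).1
    (fun m => mul_nonneg (norm_nonneg _) (norm_nonneg _))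
    (fun n => mul_nonneg (norm_nonneg _) (norm_nonneg _))
  rw [← h]
  congr 1
  funext mn
  ring

lemma myExistsRep (u : E ⊗[𝕂] F) : ∃ (R : ℕ) (x : ℕ → E) (y : ℕ → F),
    u = ∑ r ∈ Finset.range R, x r ⊗ₜ[𝕂] y r := by
  induction u with
  | zero => exact ⟨0, fun _ => 0, fun _ => 0, by simp⟩
  | tmul x y => exact ⟨1, fun _ => x, fun _ => y, by simp⟩
  | add u v hu hv =>
      obtain ⟨R, x, y, rfl⟩ := hu
      obtain ⟨S, z, w, rfl⟩ := hv
      refine ⟨R + S, fun r => if r < R then x r else z (r - R),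
        fun r => if r < R then y r else w (r - R), ?_⟩
      induction S with
      | zero =>
          rw [Finset.sum_range_zero, add_zero]
          refine Finset.sum_congr (by norm_num) fun r hr => ?_
          have hr' : r < R := by simpa using Finset.mem_range.1 hr
          simp only [if_pos hr']
      | succ S ih =>
          have hRS : R + (S + 1) = (R + S) + 1 := rfl
          rw [hRS, Finset.sum_range_succ, Finset.sum_range_succ, ← add_assoc, ih]
          simp only [if_neg (show ¬ R + S < R by omega), Nat.add_sub_cancel_left]

lemma myBessRepNonneg (a : ℕ → E) (b : ℕ → E →L[𝕂] 𝕂) (c : ℕ → F) (d : ℕ → F →L[𝕂] 𝕂)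
    (R : ℕ) (x : ℕ → E) (y : ℕ → F) : 0 ≤ bessRep a b c d R x y :=
  Real.iSup_nonneg fun _ => Finset.sum_nonneg fun _ _ => tsum_nonneg fun _ => by positivity

lemma myBessRepBdd (a : ℕ → E) (b : ℕ → E →L[𝕂] 𝕂) (c : ℕ → F) (d : ℕ → F →L[𝕂] 𝕂)
    (hF : IsBesselianSchauderFrame a b) (hG : IsBesselianSchauderFrame c d)
    (R : ℕ) (x : ℕ → E) (y : ℕ → F) :
    BddAbove (Set.range fun fg : {f : E →L[𝕂] 𝕂 // ‖f‖ ≤ 1} × {g : F →L[𝕂] 𝕂 // ‖g‖ ≤ 1} =>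
      ∑ r ∈ Finset.range R, ∑' mn : ℕ × ℕ,
        ‖b mn.1 (x r)‖ * ‖d mn.2 (y r)‖ * ‖fg.1.1 (a mn.1)‖ * ‖fg.2.1 (c mn.2)‖) := by
  refine ⟨∑ r ∈ Finset.range R,
    (besselianConst a b * ‖x r‖) * (besselianConst c d * ‖y r‖), ?_⟩
  rintro t ⟨fg, rfl⟩
  refine Finset.sum_le_sum fun r _ => ?_
  rw [myTsumMN a b c d hF hG (x r) (y r) fg.1.1 fg.2.1]
  exact mul_le_mul (myTsumLe1 a b hF (x r) fg.1.2) (myTsumLe1 c d hG (y r) fg.2.2)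
    (tsum_nonneg fun _ => mul_nonneg (norm_nonneg _) (norm_nonneg _))
    (mul_nonneg (myConstNonneg a b) (norm_nonneg _))

lemma myDualPairSum (f : E →L[𝕂] 𝕂) (g : F →L[𝕂] 𝕂) (R : ℕ) (x : ℕ → E) (y : ℕ → F) :
    dualPair f g (∑ r ∈ Finset.range R, x r ⊗ₜ[𝕂] y r) =
      ∑ r ∈ Finset.range R, f (x r) * g (y r) := by
  rw [map_sum]
  exact Finset.sum_congr rfl fun r _ => by
    simp [dualPair]

end Aux

/-- For Banach spaces `E, F` with Besselian Schauder frames `𝓕, 𝓖`,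
the Besselian crossnorm is squeezed between the injective and projective tensor
norms formed with respect to the Besselian norms:
`L_𝓕⁻¹ L_𝓖⁻¹ ε_{𝓕,𝓖}(u) ≤ α^Bess_{𝓕,𝓖}(u) ≤ π_{𝓕,𝓖}(u)` for all `u ∈ E ⊗ F`. -/
theorem alphaBess_between_inj_proj [CompleteSpace E] [CompleteSpace F]
    (a : ℕ → E) (b : ℕ → E →L[𝕂] 𝕂) (c : ℕ → F) (d : ℕ → F →L[𝕂] 𝕂)
    (hF : IsBesselianSchauderFrame a b) (hG : IsBesselianSchauderFrame c d)
    (u : E ⊗[𝕂] F) :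
    (besselianConst a b)⁻¹ * (besselianConst c d)⁻¹ * injNormBess a b c d u ≤
        alphaBess a b c d u ∧
      alphaBess a b c d u ≤ projNormBess a b c d u := by
  obtain ⟨R0, x0, y0, hrep0⟩ := myExistsRep u
  have hbdd0 : BddBelow {t : ℝ | ∃ (R : ℕ) (x : ℕ → E) (y : ℕ → F),
      u = ∑ r ∈ Finset.range R, x r ⊗ₜ[𝕂] y r ∧ t = bessRep a b c d R x y} := by
    refine ⟨0, ?_⟩
    rintro t ⟨R, x, y, -, rfl⟩
    exact myBessRepNonneg a b c d R x y
  constructor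
  · unfold alphaBess
    refine le_csInf ⟨bessRep a b c d R0 x0 y0, R0, x0, y0, hrep0, rfl⟩ ?_
    rintro t ⟨R, x, y, hrep, rfl⟩
    have hrepnn := myBessRepNonneg a b c d R x y
    have key : injNormBess a b c d u ≤
        besselianConst a b * besselianConst c d * bessRep a b c d R x y := by
      unfold injNormBess
      refine Real.iSup_le (fun fg => ?_)
        (mul_nonneg (mul_nonneg (myConstNonneg a b) (myConstNonneg c d)) hrepnn)
      obtain ⟨⟨f, hf⟩, ⟨g, hg⟩⟩ := fg
      have hfL : ‖f‖ ≤ besselianConst a b := myOpNormLe a b hF hf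
      have hgL : ‖g‖ ≤ besselianConst c d := myOpNormLe c d hG hg
      have hlast : ∑ r ∈ Finset.range R,
          (∑' m : ℕ, ‖b m (x r)‖ * ‖f (a m)‖) * (∑' n : ℕ, ‖d n (y r)‖ * ‖g (c n)‖) ≤
          besselianConst a b * besselianConst c d * bessRep a b c d R x y := by
        rcases eq_or_ne f 0 with rfl | hf0
        · simp only [ContinuousLinearMap.zero_apply, norm_zero, mul_zero, tsum_zero,
            zero_mul, Finset.sum_const_zero]
          exact mul_nonneg (mul_nonneg (myConstNonneg a b) (myConstNonneg c d)) hrepnn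
        rcases eq_or_ne g 0 with rfl | hg0
        · simp only [ContinuousLinearMap.zero_apply, norm_zero, mul_zero, tsum_zero,
            Finset.sum_const_zero]
          exact mul_nonneg (mul_nonneg (myConstNonneg a b) (myConstNonneg c d)) hrepnn
        have hfne : ‖f‖ ≠ 0 := norm_ne_zero_iff.2 hf0
        have hgne : ‖g‖ ≠ 0 := norm_ne_zero_iff.2 hg0
        have hf1n : ‖((‖f‖⁻¹ : ℝ) : 𝕂) • f‖ ≤ 1 := myUnitCLM hfne
        have hg1n : ‖((‖g‖⁻¹ : ℝ) : 𝕂) • g‖ ≤ 1 := myUnitCLM hgne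
        have e1 : ∀ r : ℕ, ∑' m : ℕ, ‖b m (x r)‖ * ‖f (a m)‖ =
            ‖f‖ * ∑' m : ℕ, ‖b m (x r)‖ * ‖(((‖f‖⁻¹ : ℝ) : 𝕂) • f) (a m)‖ := fun r => by
          rw [myTsum_smul_right, abs_inv, abs_norm, ← mul_assoc, mul_inv_cancel₀ hfne, one_mul]
        have e2 : ∀ r : ℕ, ∑' n : ℕ, ‖d n (y r)‖ * ‖g (c n)‖ =
            ‖g‖ * ∑' n : ℕ, ‖d n (y r)‖ * ‖(((‖g‖⁻¹ : ℝ) : 𝕂) • g) (c n)‖ := fun r => by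
          rw [myTsum_smul_right, abs_inv, abs_norm, ← mul_assoc, mul_inv_cancel₀ hgne, one_mul]
        have hT : ∑ r ∈ Finset.range R,
            (∑' m : ℕ, ‖b m (x r)‖ * ‖(((‖f‖⁻¹ : ℝ) : 𝕂) • f) (a m)‖) *
            (∑' n : ℕ, ‖d n (y r)‖ * ‖(((‖g‖⁻¹ : ℝ) : 𝕂) • g) (c n)‖) ≤
            bessRep a b c d R x y := by
          have h := le_ciSup (myBessRepBdd a b c d hF hG R x y)
            (⟨⟨((‖f‖⁻¹ : ℝ) : 𝕂) • f, hf1n⟩, ⟨((‖g‖⁻¹ : ℝ) : 𝕂) • g, hg1n⟩⟩ :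
              {f : E →L[𝕂] 𝕂 // ‖f‖ ≤ 1} × {g : F →L[𝕂] 𝕂 // ‖g‖ ≤ 1})
          refine le_trans (le_of_eq ?_) h
          exact Finset.sum_congr rfl fun r _ =>
            (myTsumMN a b c d hF hG (x r) (y r) _ _).symm
        calc ∑ r ∈ Finset.range R,
            (∑' m : ℕ, ‖b m (x r)‖ * ‖f (a m)‖) * (∑' n : ℕ, ‖d n (y r)‖ * ‖g (c n)‖)
            = ‖f‖ * ‖g‖ * ∑ r ∈ Finset.range R,
              (∑' m : ℕ, ‖b m (x r)‖ * ‖(((‖f‖⁻¹ : ℝ) : 𝕂) • f) (a m)‖) *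
              (∑' n : ℕ, ‖d n (y r)‖ * ‖(((‖g‖⁻¹ : ℝ) : 𝕂) • g) (c n)‖) := by
              rw [Finset.mul_sum]
              exact Finset.sum_congr rfl fun r _ => by rw [e1 r, e2 r]; ring
          _ ≤ besselianConst a b * besselianConst c d * bessRep a b c d R x y := by
              refine mul_le_mul (mul_le_mul hfL hgL (norm_nonneg g) (myConstNonneg a b)) hT
                ?_ (mul_nonneg (myConstNonneg a b) (myConstNonneg c d))
              exact Finset.sum_nonneg fun r _ => mul_nonneg
                (tsum_nonneg fun _ => mul_nonneg (norm_nonneg _) (norm_nonneg _))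
                (tsum_nonneg fun _ => mul_nonneg (norm_nonneg _) (norm_nonneg _))
      calc ‖dualPair f g u‖ = ‖∑ r ∈ Finset.range R, f (x r) * g (y r)‖ := by
            rw [hrep, myDualPairSum]
        _ ≤ ∑ r ∈ Finset.range R, ‖f (x r) * g (y r)‖ := norm_sum_le _ _
        _ = ∑ r ∈ Finset.range R, ‖f (x r)‖ * ‖g (y r)‖ := by simp [norm_mul]
        _ ≤ ∑ r ∈ Finset.range R,
            (∑' m : ℕ, ‖b m (x r)‖ * ‖f (a m)‖) * (∑' n : ℕ, ‖d n (y r)‖ * ‖g (c n)‖) :=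
            Finset.sum_le_sum fun r _ =>
              mul_le_mul (myNormApplyLe a b hF (x r) f) (myNormApplyLe c d hG (y r) g)
                (norm_nonneg _)
                (tsum_nonneg fun _ => mul_nonneg (norm_nonneg _) (norm_nonneg _))
        _ ≤ _ := hlast
    rcases eq_or_lt_of_le (myConstNonneg a b) with hL | hL
    · rw [← hL, inv_zero, zero_mul, zero_mul]
      exact hrepnn
    rcases eq_or_lt_of_le (myConstNonneg c d) with hL' | hL'
    · rw [← hL', inv_zero, mul_zero, zero_mul]
      exact hrepnn
    have hLne : besselianConst a b ≠ 0 := hL.ne'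
    have hL'ne : besselianConst c d ≠ 0 := hL'.ne'
    have hpos : (0:ℝ) ≤ (besselianConst a b)⁻¹ * (besselianConst c d)⁻¹ := by positivity
    calc (besselianConst a b)⁻¹ * (besselianConst c d)⁻¹ * injNormBess a b c d u
        ≤ (besselianConst a b)⁻¹ * (besselianConst c d)⁻¹ *
          (besselianConst a b * besselianConst c d * bessRep a b c d R x y) := by
          rw [mul_assoc, mul_assoc]
          exact mul_le_mul_of_nonneg_left
            (mul_le_mul_of_nonneg_left key (inv_nonneg.2 hL'.le)) (inv_nonneg.2 hL.le)
      _ = bessRep a b c d R x y := by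
          field_simp
  · unfold alphaBess projNormBess
    refine le_csInf ⟨∑ r ∈ Finset.range R0, bessNorm a b (x0 r) * bessNorm c d (y0 r),
      R0, x0, y0, hrep0, rfl⟩ ?_
    rintro t ⟨R, x, y, hrep, rfl⟩
    have h1 : sInf {t : ℝ | ∃ (R : ℕ) (x : ℕ → E) (y : ℕ → F),
        u = ∑ r ∈ Finset.range R, x r ⊗ₜ[𝕂] y r ∧ t = bessRep a b c d R x y} ≤
        bessRep a b c d R x y := csInf_le hbdd0 ⟨R, x, y, hrep, rfl⟩
    refine h1.trans ?_
    unfold bessRep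
    refine Real.iSup_le (fun fg => ?_)
      (Finset.sum_nonneg fun r _ =>
        mul_nonneg (myBessNormNonneg a b (x r)) (myBessNormNonneg c d (y r)))
    refine Finset.sum_le_sum fun r _ => ?_
    rw [myTsumMN a b c d hF hG (x r) (y r) fg.1.1 fg.2.1]
    have hA : ∑' m : ℕ, ‖b m (x r)‖ * ‖fg.1.1 (a m)‖ ≤ bessNorm a b (x r) :=
      le_ciSup (myBessNormBdd a b hF (x r)) fg.1
    have hB : ∑' n : ℕ, ‖d n (y r)‖ * ‖fg.2.1 (c n)‖ ≤ bessNorm c d (y r) :=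
      le_ciSup (myBessNormBdd c d hG (y r)) fg.2
    exact mul_le_mul hA hB
      (tsum_nonneg fun _ => mul_nonneg (norm_nonneg _) (norm_nonneg _))
      (myBessNormNonneg a b (x r))
end

section
/- Let E, F be Banach spaces with Besselian Schauder frames 𝓕 = ((a_m, b_m*)) and 𝓖 = ((x_n, y_n*)). Then for every x ∈ E and y ∈ F, α^Bess_{𝓕,𝓖}(x ⊗ y) = ‖x‖^Bess_{E,𝓕} · ‖y‖^Bess_{F,𝓖}. -/
open Filter Finset TensorProduct

variable {𝕂 : Type*} [RCLike 𝕂]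
variable {E : Type*} [NormedAddCommGroup E] [NormedSpace 𝕂 E]
variable {F : Type*} [NormedAddCommGroup F] [NormedSpace 𝕂 F]

private lemma tsum_prod_mul {u v : ℕ → ℝ} (hu : Summable u) (hv : Summable v)
    (hu0 : ∀ m, 0 ≤ u m) (hv0 : ∀ n, 0 ≤ v n) :
    ∑' mn : ℕ × ℕ, u mn.1 * v mn.2 = (∑' m, u m) * (∑' n, v n) := by
  rw [Summable.tsum_prod' (hu.mul_of_nonneg hv hu0 hv0) fun m => (hv.mul_left (u m))]
  calc ∑' (m : ℕ), ∑' (n : ℕ), u m * v n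
      = ∑' (m : ℕ), u m * ∑' (n : ℕ), v n := tsum_congr fun m => tsum_mul_left
    _ = _ := tsum_mul_right

private lemma ciSup_prod_mul {ι κ : Type*} [Nonempty ι] [Nonempty κ] (A : ι → ℝ) (B : κ → ℝ)
    (hA0 : ∀ i, 0 ≤ A i) (hB0 : ∀ j, 0 ≤ B j)
    (hA : BddAbove (Set.range A)) (hB : BddAbove (Set.range B)) :
    (⨆ p : ι × κ, A p.1 * B p.2) = (⨆ i, A i) * (⨆ j, B j) := by
  have hbdd : ∀ p : ι × κ, A p.1 * B p.2 ≤ (⨆ i, A i) * (⨆ j, B j) := fun p =>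
    mul_le_mul (le_ciSup hA p.1) (le_ciSup hB p.2) (hB0 p.2)
      (le_trans (hA0 p.1) (le_ciSup hA p.1))
  refine le_antisymm (ciSup_le hbdd) ?_
  rw [Real.iSup_mul_of_nonneg (Real.iSup_nonneg hB0)]
  refine ciSup_le fun i => ?_
  rw [Real.mul_iSup_of_nonneg (hA0 i)]
  refine ciSup_le fun j => ?_
  exact le_ciSup ⟨(⨆ i, A i) * (⨆ j, B j), by rintro _ ⟨p, rfl⟩; exact hbdd p⟩ (i, j)

/-- For Banach spaces `E, F` with Besselian Schauder frames `𝓕, 𝓖`,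
the Besselian crossnorm of an elementary tensor is the product of the Besselian
norms: `α^Bess_{𝓕,𝓖}(x ⊗ y) = ‖x‖^Bess_{E,𝓕} ‖y‖^Bess_{F,𝓖}`. -/
theorem alphaBess_tmul [CompleteSpace E] [CompleteSpace F]
    (a : ℕ → E) (b : ℕ → E →L[𝕂] 𝕂) (c : ℕ → F) (d : ℕ → F →L[𝕂] 𝕂)
    (hF : IsBesselianSchauderFrame a b) (hG : IsBesselianSchauderFrame c d)
    (x : E) (y : F) :
    alphaBess a b c d (x ⊗ₜ[𝕂] y) = bessNorm a b x * bessNorm c d y := by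
  obtain ⟨-, B₁, hB₁, h₁⟩ := hF
  obtain ⟨-, B₂, hB₂, h₂⟩ := hG
  haveI : Nonempty {f : E →L[𝕂] 𝕂 // ‖f‖ ≤ 1} := ⟨⟨0, by simp⟩⟩
  haveI : Nonempty {g : F →L[𝕂] 𝕂 // ‖g‖ ≤ 1} := ⟨⟨0, by simp⟩⟩
  set A : E → {f : E →L[𝕂] 𝕂 // ‖f‖ ≤ 1} → ℝ :=
    fun z f => ∑' m : ℕ, ‖b m z‖ * ‖f.1 (a m)‖ with hAdef
  set Bv : F → {g : F →L[𝕂] 𝕂 // ‖g‖ ≤ 1} → ℝ :=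
    fun w g => ∑' n : ℕ, ‖d n w‖ * ‖g.1 (c n)‖ with hBdef
  have hAnn : ∀ z f, 0 ≤ A z f := fun z f =>
    tsum_nonneg fun m => mul_nonneg (norm_nonneg _) (norm_nonneg _)
  have hBnn : ∀ w g, 0 ≤ Bv w g := fun w g =>
    tsum_nonneg fun n => mul_nonneg (norm_nonneg _) (norm_nonneg _)
  have hAbd : ∀ z f, A z f ≤ B₁ * ‖z‖ := by
    intro z f
    refine (h₁ z f.1).2.trans ?_
    calc B₁ * ‖z‖ * ‖f.1‖ ≤ B₁ * ‖z‖ * 1 :=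
          mul_le_mul_of_nonneg_left f.2 (by positivity)
      _ = B₁ * ‖z‖ := mul_one _
  have hBbd : ∀ w g, Bv w g ≤ B₂ * ‖w‖ := by
    intro w g
    refine (h₂ w g.1).2.trans ?_
    calc B₂ * ‖w‖ * ‖g.1‖ ≤ B₂ * ‖w‖ * 1 :=
          mul_le_mul_of_nonneg_left g.2 (by positivity)
      _ = B₂ * ‖w‖ := mul_one _
  have hAbdd : ∀ z, BddAbove (Set.range (A z)) := fun z =>
    ⟨B₁ * ‖z‖, by rintro _ ⟨f, rfl⟩; exact hAbd z f⟩
  have hBbdd : ∀ w, BddAbove (Set.range (Bv w)) := fun w =>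
    ⟨B₂ * ‖w‖, by rintro _ ⟨g, rfl⟩; exact hBbd w g⟩
  -- summability of the individual factors
  have hSA : ∀ (z : E) (f : E →L[𝕂] 𝕂), Summable fun m : ℕ => ‖b m z‖ * ‖f (a m)‖ :=
    fun z f => (h₁ z f).1
  have hSB : ∀ (w : F) (g : F →L[𝕂] 𝕂), Summable fun n : ℕ => ‖d n w‖ * ‖g (c n)‖ :=
    fun w g => (h₂ w g).1
  -- summability of the double-indexed terms
  have hS2 : ∀ (z : E) (w : F) (f : E →L[𝕂] 𝕂) (g : F →L[𝕂] 𝕂),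
      Summable fun mn : ℕ × ℕ =>
        ‖b mn.1 z‖ * ‖d mn.2 w‖ * ‖f (a mn.1)‖ * ‖g (c mn.2)‖ := by
    intro z w f g
    have h := (hSA z f).mul_of_nonneg (hSB w g)
      (fun m => mul_nonneg (norm_nonneg _) (norm_nonneg _))
      (fun n => mul_nonneg (norm_nonneg _) (norm_nonneg _))
    exact h.congr fun mn => by ring
  -- factorization of the double tsum
  have hprod : ∀ (z : E) (w : F) (f : {f : E →L[𝕂] 𝕂 // ‖f‖ ≤ 1})
      (g : {g : F →L[𝕂] 𝕂 // ‖g‖ ≤ 1}),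
      (∑' mn : ℕ × ℕ, ‖b mn.1 z‖ * ‖d mn.2 w‖ * ‖f.1 (a mn.1)‖ * ‖g.1 (c mn.2)‖)
        = A z f * Bv w g := by
    intro z w f g
    have h := tsum_prod_mul (hSA z f.1) (hSB w g.1)
      (fun m => mul_nonneg (norm_nonneg _) (norm_nonneg _))
      (fun n => mul_nonneg (norm_nonneg _) (norm_nonneg _))
    rw [← h]
    exact tsum_congr fun mn => by ring
  have hxy : bessNorm a b x * bessNorm c d y
      = ⨆ fg : {f : E →L[𝕂] 𝕂 // ‖f‖ ≤ 1} × {g : F →L[𝕂] 𝕂 // ‖g‖ ≤ 1},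
          A x fg.1 * Bv y fg.2 :=
    (ciSup_prod_mul (A x) (Bv y) (hAnn x) (hBnn y) (hAbdd x) (hBbdd y)).symm
  -- the defining set of alphaBess
  set S : Set ℝ := {t : ℝ | ∃ (R : ℕ) (xs : ℕ → E) (ys : ℕ → F),
    x ⊗ₜ[𝕂] y = ∑ r ∈ Finset.range R, xs r ⊗ₜ[𝕂] ys r ∧ t = bessRep a b c d R xs ys}
      with hSdef
  -- membership of the product
  have mem : bessNorm a b x * bessNorm c d y ∈ S := by
    refine ⟨1, fun _ => x, fun _ => y, by simp, ?_⟩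
    rw [hxy]
    unfold bessRep
    refine iSup_congr fun fg => ?_
    rw [Finset.sum_range_one, hprod x y fg.1 fg.2]
  -- lower bound
  have lb : ∀ t ∈ S, bessNorm a b x * bessNorm c d y ≤ t := by
    rintro t ⟨R, xs, ys, hrep, rfl⟩
    -- key pointwise identity coming from the representation
    have key : ∀ m n : ℕ, ‖b m x‖ * ‖d n y‖
        ≤ ∑ r ∈ Finset.range R, ‖b m (xs r)‖ * ‖d n (ys r)‖ := by
      intro m n
      have hdp : (b m) x * (d n) y = ∑ r ∈ Finset.range R, (b m) (xs r) * (d n) (ys r) := by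
        have h0 := congrArg (dualPair (b m) (d n)) hrep
        simpa [dualPair, map_sum] using h0
      calc ‖b m x‖ * ‖d n y‖ = ‖(b m) x * (d n) y‖ := (norm_mul _ _).symm
        _ = ‖∑ r ∈ Finset.range R, (b m) (xs r) * (d n) (ys r)‖ := by rw [hdp]
        _ ≤ ∑ r ∈ Finset.range R, ‖(b m) (xs r) * (d n) (ys r)‖ := norm_sum_le _ _
        _ = ∑ r ∈ Finset.range R, ‖b m (xs r)‖ * ‖d n (ys r)‖ := by
            exact Finset.sum_congr rfl fun r _ => norm_mul _ _
    have hTbdd : BddAbove (Set.range fun fg :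
        {f : E →L[𝕂] 𝕂 // ‖f‖ ≤ 1} × {g : F →L[𝕂] 𝕂 // ‖g‖ ≤ 1} =>
        ∑ r ∈ Finset.range R, ∑' mn : ℕ × ℕ,
          ‖b mn.1 (xs r)‖ * ‖d mn.2 (ys r)‖ * ‖fg.1.1 (a mn.1)‖ * ‖fg.2.1 (c mn.2)‖) := by
      refine ⟨∑ r ∈ Finset.range R, (B₁ * ‖xs r‖) * (B₂ * ‖ys r‖), ?_⟩
      rintro _ ⟨fg, rfl⟩
      refine Finset.sum_le_sum fun r _ => ?_
      rw [hprod (xs r) (ys r) fg.1 fg.2]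
      exact mul_le_mul (hAbd _ _) (hBbd _ _) (hBnn _ _) (by positivity)
    rw [hxy]
    unfold bessRep
    refine ciSup_le fun fg => le_trans ?_ (le_ciSup hTbdd fg)
    rw [← hprod x y fg.1 fg.2]
    have hswap : (∑ r ∈ Finset.range R, ∑' mn : ℕ × ℕ,
          ‖b mn.1 (xs r)‖ * ‖d mn.2 (ys r)‖ * ‖fg.1.1 (a mn.1)‖ * ‖fg.2.1 (c mn.2)‖)
        = ∑' mn : ℕ × ℕ, ∑ r ∈ Finset.range R,
          ‖b mn.1 (xs r)‖ * ‖d mn.2 (ys r)‖ * ‖fg.1.1 (a mn.1)‖ * ‖fg.2.1 (c mn.2)‖ :=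
      (Summable.tsum_finsetSum fun r _ => hS2 (xs r) (ys r) fg.1.1 fg.2.1).symm
    rw [hswap]
    refine Summable.tsum_le_tsum ?_ (hS2 x y fg.1.1 fg.2.1)
      (summable_sum fun r _ => hS2 (xs r) (ys r) fg.1.1 fg.2.1)
    intro mn
    calc ‖b mn.1 x‖ * ‖d mn.2 y‖ * ‖fg.1.1 (a mn.1)‖ * ‖fg.2.1 (c mn.2)‖
        = (‖b mn.1 x‖ * ‖d mn.2 y‖) * (‖fg.1.1 (a mn.1)‖ * ‖fg.2.1 (c mn.2)‖) := by ring
      _ ≤ (∑ r ∈ Finset.range R, ‖b mn.1 (xs r)‖ * ‖d mn.2 (ys r)‖)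
            * (‖fg.1.1 (a mn.1)‖ * ‖fg.2.1 (c mn.2)‖) :=
          mul_le_mul_of_nonneg_right (key mn.1 mn.2)
            (mul_nonneg (norm_nonneg _) (norm_nonneg _))
      _ = ∑ r ∈ Finset.range R,
            ‖b mn.1 (xs r)‖ * ‖d mn.2 (ys r)‖ * ‖fg.1.1 (a mn.1)‖ * ‖fg.2.1 (c mn.2)‖ := by
          rw [Finset.sum_mul]; exact Finset.sum_congr rfl fun r _ => by ring
  show sInf S = bessNorm a b x * bessNorm c d y
  exact le_antisymm (csInf_le ⟨_, fun t ht => lb t ht⟩ mem) (le_csInf ⟨_, mem⟩ lb)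
end

section
/- Let E, F be Banach spaces with unconditional Schauder bases 𝓕 = ((a_m, b_m*)) and 𝓖 = ((x_n, y_n*)). Then for every finitely supported family of scalars (λ_{i,j})_{1≤i≤k, 1≤j≤k'}, α^Bess_{𝓕,𝓖}(∑_{i=1}^k ∑_{j=1}^{k'} λ_{i,j} a_i ⊗ x_j) = sup_{‖f*‖_{E*} ≤ 1, ‖g*‖_{F*} ≤ 1} ∑_{i=1}^k ∑_{j=1}^{k'} |λ_{i,j}| |f*(a_i)| |g*(x_j)|. -/
open Filter Finset TensorProduct

variable {𝕂 : Type*} [RCLike 𝕂]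
variable {E : Type*} [NormedAddCommGroup E] [NormedSpace 𝕂 E]
variable {F : Type*} [NormedAddCommGroup F] [NormedSpace 𝕂 F]

/-!
Testing a representation `u = ∑ x^r ⊗ y^r` of `∑ λ_{ij} a_i ⊗ c_j` against `b_i* ⊗ d_j*` gives
`λ_{ij} = ∑_r b_i*(x^r) d_j*(y^r)`, so `|λ_{ij}| ≤ ∑_r |b_i*(x^r)| |d_j*(y^r)|`; weighting by
`|f*(a_i)| |g*(c_j)|` shows that `Bess` of every representation dominates the supremum, while the
row representation `∑_i a_i ⊗ (∑_j λ_{ij} c_j)` attains it by biorthogonality.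

The comparison needs the Besselian sums to be finite. Every rearrangement of `∑ b_m*(x) a_m`
converges; if the series were not unconditionally Cauchy, disjoint blocks of norm `≥ ε` could be
spliced into one rearrangement whose partial sums jump by `ε` infinitely often. So its finite
subsums are bounded, and splitting a scalar sum into real and imaginary parts of each sign bounds
`∑_m |b_m*(x)| |f*(a_m)|` by four times that bound.
-/

theorem exists_perm_strictMono_comp {code : ℕ → ℕ} (hcode : Function.Injective code) :
    ∃ σ : Equiv.Perm ℕ, StrictMono (code ∘ σ) := by
  have : Infinite (Set.range code) := (Set.infinite_range_of_injective hcode).to_subtype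
  let e := Nat.Subtype.orderIsoOfNat (Set.range code)
  refine ⟨e.toEquiv.trans (Equiv.ofInjective code hcode).symm, fun i j hij => ?_⟩
  simp only [Function.comp_apply, Equiv.trans_apply, Equiv.apply_ofInjective_symm]
  exact e.strictMono hij

theorem exists_perm_image_range_card_eq {U : ℕ → Finset ℕ} (hU : Monotone U)
    (hcover : ∀ m, ∃ j, m ∈ U j) :
    ∃ σ : Equiv.Perm ℕ, ∀ j, (range #(U j)).image σ = U j := by
  let level : ℕ → ℕ := fun m => Nat.find (hcover m)
  have mem_iff : ∀ m j, m ∈ U j ↔ level m ≤ j := fun m j =>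
    ⟨fun h => Nat.find_min' _ h, fun h => hU h (Nat.find_spec (hcover m))⟩
  -- sort `ℕ` lexicographically by `(level m, m)`, encoded injectively into `ℕ`
  let B : ℕ → ℕ := fun j => (U j).sup id + 1
  let code : ℕ → ℕ := fun m => m + ∑ i ∈ range (level m), B i
  have code_lt : ∀ m m', level m < level m' → code m < code m' := by
    intro m m' h
    have hm : m < B (level m) :=
      Nat.lt_succ_of_le (le_sup (f := id) ((mem_iff m _).2 le_rfl))
    calc code m < ∑ i ∈ range (level m + 1), B i := by simp only [code, sum_range_succ]; omega
      _ ≤ ∑ i ∈ range (level m'), B i := sum_le_sum_of_subset (range_subset_range.2 h)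
      _ ≤ code m' := Nat.le_add_left _ _
  have hcode : Function.Injective code := by
    intro m m' h
    rcases lt_trichotomy (level m) (level m') with hl | hl | hl
    · exact absurd h (code_lt _ _ hl).ne
    · simpa [code, hl] using h
    · exact absurd h (code_lt _ _ hl).ne'
  obtain ⟨σ, hσ⟩ := exists_perm_strictMono_comp hcode
  have level_mono : Monotone (level ∘ σ) := fun i i' hii' => by
    by_contra! h
    exact (code_lt _ _ h).not_ge (hσ.monotone hii')
  refine ⟨σ, fun j => eq_of_subset_of_card_le ?_ ?_⟩
  · intro m hm
    obtain ⟨i, hi, rfl⟩ := mem_image.1 hm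
    by_contra hout
    have hsub : (U j).image σ.symm ⊆ range i := by
      intro i' hi'
      obtain ⟨m', hm', rfl⟩ := mem_image.1 hi'
      by_contra hge
      rw [mem_range, not_lt] at hge
      have hm'_level : level (σ (σ.symm m')) ≤ j := by
        rw [σ.apply_symm_apply]; exact (mem_iff _ _).1 hm'
      exact hout ((mem_iff _ _).2 ((level_mono hge).trans hm'_level))
    have := card_le_card hsub
    rw [card_image_of_injective _ σ.symm.injective, card_range] at this
    exact absurd (mem_range.1 hi) (by omega)
  · rw [card_image_of_injective _ σ.injective, card_range]

theorem exists_perm_image_range_card_eq_of_extend (T : Finset ℕ → Finset ℕ) :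
    ∃ (σ : Equiv.Perm ℕ) (W : ℕ → Finset ℕ), ∀ k, k ≤ #(W k) ∧
      (range #(W k)).image σ = W k ∧ (range #(W k ∪ T (W k))).image σ = W k ∪ T (W k) := by
  let W : ℕ → Finset ℕ := fun k => Nat.rec ∅ (fun k s => insert k (s ∪ T s)) k
  have W_succ : ∀ k, W (k + 1) = insert k (W k ∪ T (W k)) := fun _ => rfl
  have range_sub_W : ∀ k, range k ⊆ W k := by
    intro k
    induction k with
    | zero => simp
    | succ k ih =>
      rw [range_add_one, W_succ]
      exact insert_subset_insert _ (ih.trans subset_union_left)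
  -- the chain `W 0 ⊆ W 0 ∪ T (W 0) ⊆ W 1 ⊆ W 1 ∪ T (W 1) ⊆ ⋯`
  let U : ℕ → Finset ℕ := fun j => if j % 2 = 0 then W (j / 2) else W (j / 2) ∪ T (W (j / 2))
  have U_even : ∀ k, U (2 * k) = W k := fun k => by simp [U]
  have U_odd : ∀ k, U (2 * k + 1) = W k ∪ T (W k) := fun k => by
    simp only [U, if_neg (by omega : (2 * k + 1) % 2 ≠ 0)]
    rw [show (2 * k + 1) / 2 = k by omega]
  have hU : Monotone U := by
    refine monotone_nat_of_le_succ fun j => ?_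
    obtain ⟨k, rfl | rfl⟩ := Nat.even_or_odd' j
    · rw [U_even, U_odd]; exact subset_union_left
    · rw [U_odd, show 2 * k + 1 + 1 = 2 * (k + 1) by ring, U_even, W_succ]
      exact subset_insert _ _
  have hcover : ∀ m, ∃ j, m ∈ U j := fun m =>
    ⟨2 * (m + 1), by rw [U_even]; exact range_sub_W _ (self_mem_range_succ m)⟩
  obtain ⟨σ, hσ⟩ := exists_perm_image_range_card_eq hU hcover
  refine ⟨σ, W, fun k => ⟨?_, by simpa [U_even] using hσ (2 * k), ?_⟩⟩
  · simpa using card_le_card (range_sub_W k)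
  · simpa [U_odd] using hσ (2 * k + 1)

theorem cauchySeq_finset_sum_of_forall_perm_tendsto {G : Type*} [SeminormedAddCommGroup G]
    {v : ℕ → G} {x : G}
    (h : ∀ σ : Equiv.Perm ℕ, Tendsto (fun n => ∑ i ∈ range n, v (σ i)) atTop (nhds x)) :
    CauchySeq fun s : Finset ℕ => ∑ i ∈ s, v i := by
  rw [cauchySeq_finset_iff_vanishing_norm]
  by_contra! hbad
  obtain ⟨ε, hε, hbad⟩ := hbad
  choose T hTdisj hTnorm using hbad
  obtain ⟨σ, W, hW⟩ := exists_perm_image_range_card_eq_of_extend T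
  have lim : ∀ s : ℕ → Finset ℕ, (∀ k, k ≤ #(s k) ∧ (range #(s k)).image σ = s k) →
      Tendsto (fun k => ∑ m ∈ s k, v m) atTop (nhds x) := by
    intro s hs
    refine ((h σ).comp (tendsto_atTop_mono (fun k => (hs k).1) tendsto_id)).congr fun k => ?_
    conv_rhs => rw [← (hs k).2]
    exact (sum_image fun _ _ _ _ h => σ.injective h).symm
  have hdiff : Tendsto (fun k => ∑ m ∈ T (W k), v m) atTop (nhds 0) := by
    have := (lim (fun k => W k ∪ T (W k)) fun k =>
      ⟨(hW k).1.trans (card_le_card subset_union_left), (hW k).2.2⟩).sub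
      (lim W fun k => ⟨(hW k).1, (hW k).2.1⟩)
    rw [sub_self] at this
    exact this.congr fun k => by rw [sum_union (hTdisj _).symm, add_sub_cancel_left]
  obtain ⟨k, hk⟩ := (hdiff.norm.eventually (gt_mem_nhds (by simpa using hε))).exists
  exact (hTnorm (W k)).not_gt (by simpa using hk)

theorem exists_forall_norm_finset_sum_le_of_cauchySeq {ι G : Type*} [SeminormedAddCommGroup G]
    {v : ι → G} (h : CauchySeq fun s : Finset ι => ∑ i ∈ s, v i) :
    ∃ C, ∀ A : Finset ι, ‖∑ i ∈ A, v i‖ ≤ C := by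
  classical
  obtain ⟨s, hs⟩ := cauchySeq_finset_iff_vanishing_norm.1 h 1 one_pos
  refine ⟨∑ i ∈ s, ‖v i‖ + 1, fun A => ?_⟩
  rw [← sum_inter_add_sum_sdiff A s]
  refine (norm_add_le _ _).trans (add_le_add ?_ (hs _ sdiff_disjoint).le)
  exact (norm_sum_le _ _).trans
    (sum_le_sum_of_subset_of_nonneg inter_subset_right fun _ _ _ => norm_nonneg _)

theorem sum_abs_le_two_mul_of_forall_abs_sum_le {ι : Type*} {w : ι → ℝ} {C : ℝ}
    (hw : ∀ A : Finset ι, |∑ i ∈ A, w i| ≤ C) (A : Finset ι) : ∑ i ∈ A, |w i| ≤ 2 * C := by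
  have hpos : ∑ i ∈ A with 0 ≤ w i, |w i| = ∑ i ∈ A with 0 ≤ w i, w i :=
    sum_congr rfl fun i hi => abs_of_nonneg (mem_filter.1 hi).2
  have hneg : ∑ i ∈ A with ¬0 ≤ w i, |w i| = -∑ i ∈ A with ¬0 ≤ w i, w i := by
    rw [← sum_neg_distrib]
    exact sum_congr rfl fun i hi => abs_of_neg (not_le.1 (mem_filter.1 hi).2)
  rw [← sum_filter_add_sum_filter_not A (fun i => 0 ≤ w i), hpos, hneg]
  linarith [(abs_le.1 (hw {i ∈ A | 0 ≤ w i})).2, (abs_le.1 (hw {i ∈ A | ¬0 ≤ w i})).1]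

theorem RCLike.norm_le_abs_re_add_abs_im (z : 𝕂) : ‖z‖ ≤ |re z| + |im z| := by
  refine le_of_sq_le_sq ?_ (by positivity)
  rw [norm_sq_eq_def]
  nlinarith [abs_nonneg (re z), abs_nonneg (im z), sq_abs (re z), sq_abs (im z)]

theorem RCLike.sum_norm_le_four_mul_of_forall_norm_sum_le {ι : Type*} {w : ι → 𝕂} {C : ℝ}
    (hw : ∀ A : Finset ι, ‖∑ i ∈ A, w i‖ ≤ C) (A : Finset ι) : ∑ i ∈ A, ‖w i‖ ≤ 4 * C := by
  have hre : ∀ A : Finset ι, |∑ i ∈ A, re (w i)| ≤ C := fun A => by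
    rw [← map_sum]; exact (abs_re_le_norm _).trans (hw A)
  have him : ∀ A : Finset ι, |∑ i ∈ A, im (w i)| ≤ C := fun A => by
    rw [← map_sum]; exact (abs_im_le_norm _).trans (hw A)
  calc ∑ i ∈ A, ‖w i‖ ≤ ∑ i ∈ A, |re (w i)| + ∑ i ∈ A, |im (w i)| := by
        rw [← sum_add_distrib]; exact sum_le_sum fun i _ => norm_le_abs_re_add_abs_im _
    _ ≤ 2 * C + 2 * C := add_le_add (sum_abs_le_two_mul_of_forall_abs_sum_le hre A)
        (sum_abs_le_two_mul_of_forall_abs_sum_le him A)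
    _ = 4 * C := by ring

def IsBiorthogonal (a : ℕ → E) (b : ℕ → E →L[𝕂] 𝕂) : Prop :=
  ∀ i j : ℕ, b i (a j) = if i = j then 1 else 0

theorem IsBiorthogonal.apply_sum_smul {a : ℕ → E} {b : ℕ → E →L[𝕂] 𝕂} (hab : IsBiorthogonal a b)
    (s : Finset ℕ) (μ : ℕ → 𝕂) (m : ℕ) :
    b m (∑ i ∈ s, μ i • a i) = if m ∈ s then μ m else 0 := by
  simp [map_sum, hab _ _]

theorem IsUnconditionalSchauderBasis.exists_sum_norm_coeff_mul_le {a : ℕ → E}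
    {b : ℕ → E →L[𝕂] 𝕂} (hab : IsUnconditionalSchauderBasis a b) (x : E) :
    ∃ C, ∀ f : E →L[𝕂] 𝕂, ‖f‖ ≤ 1 → ∀ A : Finset ℕ, ∑ m ∈ A, ‖b m x‖ * ‖f (a m)‖ ≤ C := by
  obtain ⟨C, hC⟩ := exists_forall_norm_finset_sum_le_of_cauchySeq
    (cauchySeq_finset_sum_of_forall_perm_tendsto (v := fun m => b m x • a m) (hab.2 x))
  refine ⟨4 * C, fun f hf A => ?_⟩
  have hw : ∀ A : Finset ℕ, ‖∑ m ∈ A, f (b m x • a m)‖ ≤ C := fun A => by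
    rw [← map_sum]
    exact (f.le_opNorm _).trans ((mul_le_of_le_one_left (norm_nonneg _) hf).trans (hC A))
  simpa using RCLike.sum_norm_le_four_mul_of_forall_norm_sum_le hw A

theorem dualPair_tmul (f : E →L[𝕂] 𝕂) (g : F →L[𝕂] 𝕂) (x : E) (y : F) :
    dualPair f g (x ⊗ₜ y) = f x * g y := rfl

noncomputable def bessTerm (a : ℕ → E) (b : ℕ → E →L[𝕂] 𝕂) (c : ℕ → F) (d : ℕ → F →L[𝕂] 𝕂)
    (x : E) (y : F) (f : E →L[𝕂] 𝕂) (g : F →L[𝕂] 𝕂) (mn : ℕ × ℕ) : ℝ :=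
  ‖b mn.1 x‖ * ‖d mn.2 y‖ * ‖f (a mn.1)‖ * ‖g (c mn.2)‖

section Besselian

variable {a : ℕ → E} {b : ℕ → E →L[𝕂] 𝕂} {c : ℕ → F} {d : ℕ → F →L[𝕂] 𝕂}

theorem bessRep_eq_iSup_bessTerm (R : ℕ) (x : ℕ → E) (y : ℕ → F) :
    bessRep a b c d R x y = ⨆ fg : {f : E →L[𝕂] 𝕂 // ‖f‖ ≤ 1} × {g : F →L[𝕂] 𝕂 // ‖g‖ ≤ 1},
      ∑ r ∈ range R, ∑' mn, bessTerm a b c d (x r) (y r) fg.1.1 fg.2.1 mn := rfl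

theorem bessTerm_nonneg (x : E) (y : F) (f : E →L[𝕂] 𝕂) (g : F →L[𝕂] 𝕂) :
    0 ≤ bessTerm a b c d x y f g := fun _ => by unfold bessTerm; positivity

theorem exists_sum_bessTerm_le (hab : IsUnconditionalSchauderBasis a b)
    (hcd : IsUnconditionalSchauderBasis c d) (x : E) (y : F) :
    ∃ C, ∀ (f : E →L[𝕂] 𝕂) (g : F →L[𝕂] 𝕂), ‖f‖ ≤ 1 → ‖g‖ ≤ 1 →
      ∀ P : Finset (ℕ × ℕ), ∑ mn ∈ P, bessTerm a b c d x y f g mn ≤ C := by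
  obtain ⟨Cx, hCx⟩ := hab.exists_sum_norm_coeff_mul_le x
  obtain ⟨Cy, hCy⟩ := hcd.exists_sum_norm_coeff_mul_le y
  refine ⟨Cx * Cy, fun f g hf hg P => ?_⟩
  have hP : P ⊆ P.image Prod.fst ×ˢ P.image Prod.snd := fun mn h =>
    mem_product.2 ⟨mem_image_of_mem _ h, mem_image_of_mem _ h⟩
  calc ∑ mn ∈ P, bessTerm a b c d x y f g mn
      ≤ ∑ mn ∈ P.image Prod.fst ×ˢ P.image Prod.snd, bessTerm a b c d x y f g mn :=
        sum_le_sum_of_subset_of_nonneg hP fun mn _ _ => bessTerm_nonneg x y f g mn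
    _ = (∑ m ∈ P.image Prod.fst, ‖b m x‖ * ‖f (a m)‖) *
          ∑ n ∈ P.image Prod.snd, ‖d n y‖ * ‖g (c n)‖ := by
        rw [sum_product, sum_mul_sum]
        refine sum_congr rfl fun m _ => sum_congr rfl fun n _ => ?_
        simp only [bessTerm]; ring
    _ ≤ Cx * Cy :=
        mul_le_mul (hCx f hf _) (hCy g hg _) (by positivity)
          ((sum_nonneg fun _ _ => by positivity).trans (hCx f hf ∅))

theorem summable_bessTerm (hab : IsUnconditionalSchauderBasis a b)
    (hcd : IsUnconditionalSchauderBasis c d) (x : E) (y : F) {f : E →L[𝕂] 𝕂} {g : F →L[𝕂] 𝕂}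
    (hf : ‖f‖ ≤ 1) (hg : ‖g‖ ≤ 1) : Summable (bessTerm a b c d x y f g) := by
  obtain ⟨C, hC⟩ := exists_sum_bessTerm_le hab hcd x y
  exact summable_of_sum_le (bessTerm_nonneg x y f g) (hC f g hf hg)

theorem bddAbove_range_sum_tsum_bessTerm (hab : IsUnconditionalSchauderBasis a b)
    (hcd : IsUnconditionalSchauderBasis c d) (R : ℕ) (x : ℕ → E) (y : ℕ → F) :
    BddAbove (Set.range fun fg : {f : E →L[𝕂] 𝕂 // ‖f‖ ≤ 1} × {g : F →L[𝕂] 𝕂 // ‖g‖ ≤ 1} =>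
      ∑ r ∈ range R, ∑' mn, bessTerm a b c d (x r) (y r) fg.1.1 fg.2.1 mn) := by
  choose C hC using fun r => exists_sum_bessTerm_le hab hcd (x r) (y r)
  refine ⟨∑ r ∈ range R, C r, ?_⟩
  rintro _ ⟨⟨⟨f, hf⟩, ⟨g, hg⟩⟩, rfl⟩
  exact sum_le_sum fun r _ =>
    (summable_bessTerm hab hcd _ _ hf hg).tsum_le_of_sum_le (hC r f g hf hg)

/-- Testing a representation of `∑ λ_{ij} a_i ⊗ c_j` against `b_i* ⊗ d_j*` recovers `λ_{ij}`. -/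
theorem norm_coeff_le_of_sum_smul_tmul_eq (hab : IsBiorthogonal a b) (hcd : IsBiorthogonal c d)
    {s t : Finset ℕ} {lam : ℕ → ℕ → 𝕂} {R : ℕ} {x : ℕ → E} {y : ℕ → F}
    (hu : ∑ i ∈ s, ∑ j ∈ t, lam i j • (a i ⊗ₜ[𝕂] c j) = ∑ r ∈ range R, x r ⊗ₜ[𝕂] y r)
    {i j : ℕ} (hi : i ∈ s) (hj : j ∈ t) :
    ‖lam i j‖ ≤ ∑ r ∈ range R, ‖b i (x r)‖ * ‖d j (y r)‖ := by
  have key := congrArg (dualPair (b i) (d j)) hu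
  simp [map_sum, dualPair_tmul, hab _ _, hcd _ _, hi, hj] at key
  rw [key]
  exact (norm_sum_le _ _).trans (sum_le_sum fun r _ => (norm_mul _ _).le)

theorem iSup_sum_norm_le_bessRep (hab : IsUnconditionalSchauderBasis a b)
    (hcd : IsUnconditionalSchauderBasis c d) {s t : Finset ℕ} {lam : ℕ → ℕ → 𝕂} {R : ℕ}
    {x : ℕ → E} {y : ℕ → F}
    (hu : ∑ i ∈ s, ∑ j ∈ t, lam i j • (a i ⊗ₜ[𝕂] c j) = ∑ r ∈ range R, x r ⊗ₜ[𝕂] y r) :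
    ⨆ fg : {f : E →L[𝕂] 𝕂 // ‖f‖ ≤ 1} × {g : F →L[𝕂] 𝕂 // ‖g‖ ≤ 1},
        ∑ i ∈ s, ∑ j ∈ t, ‖lam i j‖ * ‖fg.1.1 (a i)‖ * ‖fg.2.1 (c j)‖ ≤
      bessRep a b c d R x y := by
  rw [bessRep_eq_iSup_bessTerm]
  refine ciSup_mono (bddAbove_range_sum_tsum_bessTerm hab hcd R x y) ?_
  rintro ⟨⟨f, hf⟩, ⟨g, hg⟩⟩
  calc ∑ i ∈ s, ∑ j ∈ t, ‖lam i j‖ * ‖f (a i)‖ * ‖g (c j)‖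
      = ∑ mn ∈ s ×ˢ t, ‖lam mn.1 mn.2‖ * ‖f (a mn.1)‖ * ‖g (c mn.2)‖ := by rw [sum_product]
    _ ≤ ∑ mn ∈ s ×ˢ t, ∑ r ∈ range R, bessTerm a b c d (x r) (y r) f g mn := by
        refine sum_le_sum fun mn hmn => ?_
        simp only [bessTerm, ← sum_mul]
        refine mul_le_mul_of_nonneg_right (mul_le_mul_of_nonneg_right ?_ (norm_nonneg _))
          (norm_nonneg _)
        exact norm_coeff_le_of_sum_smul_tmul_eq hab.1 hcd.1 hu (mem_product.1 hmn).1
          (mem_product.1 hmn).2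
    _ = ∑ r ∈ range R, ∑ mn ∈ s ×ˢ t, bessTerm a b c d (x r) (y r) f g mn := sum_comm
    _ ≤ ∑ r ∈ range R, ∑' mn, bessTerm a b c d (x r) (y r) f g mn := by
        refine sum_le_sum fun r _ => ?_
        exact (summable_bessTerm hab hcd _ _ hf hg).sum_le_tsum _ fun mn _ =>
          bessTerm_nonneg _ _ f g mn

theorem bessRep_rows_eq (hab : IsBiorthogonal a b) (hcd : IsBiorthogonal c d) (k : ℕ)
    (t : Finset ℕ) (lam : ℕ → ℕ → 𝕂) :
    bessRep a b c d k a (fun i => ∑ j ∈ t, lam i j • c j) =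
      ⨆ fg : {f : E →L[𝕂] 𝕂 // ‖f‖ ≤ 1} × {g : F →L[𝕂] 𝕂 // ‖g‖ ≤ 1},
        ∑ i ∈ range k, ∑ j ∈ t, ‖lam i j‖ * ‖fg.1.1 (a i)‖ * ‖fg.2.1 (c j)‖ := by
  rw [bessRep_eq_iSup_bessTerm]
  refine iSup_congr fun fg => sum_congr rfl fun i _ => ?_
  rw [tsum_eq_sum (s := {i} ×ˢ t), sum_product, sum_singleton]
  · refine sum_congr rfl fun j hj => ?_
    simp [bessTerm, hab _ _, hcd.apply_sum_smul, hj]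
  · rintro ⟨m, n⟩ hmn
    simp only [mem_product, mem_singleton, not_and_or] at hmn
    rcases hmn with hm | hn
    · simp [bessTerm, hab _ _, hm]
    · simp [bessTerm, hcd.apply_sum_smul, hn]

end Besselian

theorem alphaBess_basis_combination_general
    (a : ℕ → E) (b : ℕ → E →L[𝕂] 𝕂) (c : ℕ → F) (d : ℕ → F →L[𝕂] 𝕂)
    (hF : IsUnconditionalSchauderBasis a b) (hG : IsUnconditionalSchauderBasis c d)
    (k k' : ℕ) (lam : ℕ → ℕ → 𝕂) :
    alphaBess a b c d
        (∑ i ∈ Finset.range k, ∑ j ∈ Finset.range k', lam i j • (a i ⊗ₜ[𝕂] c j)) =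
      ⨆ fg : {f : E →L[𝕂] 𝕂 // ‖f‖ ≤ 1} × {g : F →L[𝕂] 𝕂 // ‖g‖ ≤ 1},
        ∑ i ∈ Finset.range k, ∑ j ∈ Finset.range k',
          ‖lam i j‖ * ‖fg.1.1 (a i)‖ * ‖fg.2.1 (c j)‖ := by
  have hrows : ∑ i ∈ range k, ∑ j ∈ range k', lam i j • (a i ⊗ₜ[𝕂] c j) =
      ∑ i ∈ range k, a i ⊗ₜ[𝕂] ∑ j ∈ range k', lam i j • c j := by
    simp only [tmul_sum, tmul_smul]
  refine IsLeast.csInf_eq ⟨⟨k, a, _, hrows, (bessRep_rows_eq hF.1 hG.1 k _ lam).symm⟩, ?_⟩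
  rintro _ ⟨R, x, y, hu, rfl⟩
  exact iSup_sum_norm_le_bessRep hF hG hu

/-- For Banach spaces `E, F` with unconditional Schauder bases
`𝓕 = ((a_m, b_m*))`, `𝓖 = ((x_n, y_n*))`, and any finitely supported scalar family
`(λ_{i,j})`, the Besselian crossnorm of `∑_{i<k} ∑_{j<k'} λ_{i,j} a_i ⊗ x_j` equals
`sup_{‖f*‖≤1, ‖g*‖≤1} ∑_{i<k} ∑_{j<k'} |λ_{i,j}| |f*(a_i)| |g*(x_j)|`. -/
theorem alphaBess_basis_combination [CompleteSpace E] [CompleteSpace F]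
    (a : ℕ → E) (b : ℕ → E →L[𝕂] 𝕂) (c : ℕ → F) (d : ℕ → F →L[𝕂] 𝕂)
    (hF : IsUnconditionalSchauderBasis a b) (hG : IsUnconditionalSchauderBasis c d)
    (k k' : ℕ) (lam : ℕ → ℕ → 𝕂) :
    alphaBess a b c d
        (∑ i ∈ Finset.range k, ∑ j ∈ Finset.range k', lam i j • (a i ⊗ₜ[𝕂] c j)) =
      ⨆ fg : {f : E →L[𝕂] 𝕂 // ‖f‖ ≤ 1} × {g : F →L[𝕂] 𝕂 // ‖g‖ ≤ 1},
        ∑ i ∈ Finset.range k, ∑ j ∈ Finset.range k',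
          ‖lam i j‖ * ‖fg.1.1 (a i)‖ * ‖fg.2.1 (c j)‖ :=
  alphaBess_basis_combination_general a b c d hF hG k k' lam
end

section
/- Let 𝓕 = 𝓖 = ((e_m, e_m*))_{m≥1} be the canonical orthonormal basis of the real space ℓ_2 with its coordinate functionals, and let v = e_1 ⊗ e_1 + e_1 ⊗ e_2 + e_2 ⊗ e_2 − e_2 ⊗ e_1 ∈ ℓ_2 ⊗ ℓ_2. Then the injective tensor norm satisfies ε(v) = √2, while α^Bess_{𝓕,𝓖}(v) = 2. In particular α^Bess_{𝓕,𝓖} is not proportional to the injective norm on ℓ_2 ⊗ ℓ_2. -/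
/-!
Write `a_m = f*(e_m)` and `b_n = g*(e_n)`. Then `⟨f* ⊗ g*, v⟩ = a₀(b₀ + b₁) + a₁(b₁ - b₀)`, and
Cauchy–Schwarz against `(b₀ + b₁, b₁ - b₀)`, of squared length `2(b₀² + b₁²) ≤ 2`, gives
`ε(v) ≤ √2`, with equality at `f* = ⟪(e₀ + e₁)/√2, ·⟫`, `g* = e₁*`.

For `α^Bess`, the double sum over `m, n` splits for each `r` into
`(∑ₘ |x^r_m| |f*(e_m)|) (∑ₙ |y^r_n| |g*(e_n)|)`. For the representation of `v` by its four
elementary tensors this is `(|a₀| + |a₁|)(|b₀| + |b₁|) ≤ √2 · √2`. Conversely, for any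
representation, testing with `f* = g* = ⟪(e₀ + e₁)/√2, ·⟫` and keeping only `m, n ≤ 1` gives at
least `½ ∑_{m,n ≤ 1} ∑_r |x^r_m y^r_n| ≥ ½ ∑_{m,n ≤ 1} |v_{mn}| = 2`.

Both norms equal `1` on `e₀ ⊗ e₀`, so a proportionality constant would be `1`, while `2 ≠ √2`.
-/

open Filter Finset TensorProduct
open scoped ENNReal

/-- The real space `ℓ_2`. -/
noncomputable abbrev ellTwoR := lp (fun _ : ℕ => ℝ) 2

/-- The canonical basis vector `e_n` of the real `ℓ_2`. -/
noncomputable def eTwoR (n : ℕ) : ellTwoR := lp.single 2 n (1 : ℝ)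

/-- The functional `f* ⊗ g*` on the algebraic tensor product. -/
noncomputable def dualPairR (f : ellTwoR →L[ℝ] ℝ) (g : ellTwoR →L[ℝ] ℝ) :
    ellTwoR ⊗[ℝ] ellTwoR →ₗ[ℝ] ℝ :=
  TensorProduct.lift (((LinearMap.mul ℝ ℝ).compl₂ g.toLinearMap).comp f.toLinearMap)

/-- The Besselian crossnorm `α^Bess_{𝓕,𝓖}` on `ℓ_2 ⊗ ℓ_2`, where `𝓕 = 𝓖` is the
canonical orthonormal basis `((e_m, e_m*))` of the real `ℓ_2` (so `e_m*(x) = x_m`). -/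
noncomputable def alphaBessL2R (u : ellTwoR ⊗[ℝ] ellTwoR) : ℝ :=
  sInf {t : ℝ | ∃ (R : ℕ) (x y : ℕ → ellTwoR),
    u = ∑ r ∈ Finset.range R, x r ⊗ₜ[ℝ] y r ∧
    t = ⨆ fg : {f : ellTwoR →L[ℝ] ℝ // ‖f‖ ≤ 1} × {g : ellTwoR →L[ℝ] ℝ // ‖g‖ ≤ 1},
      ∑ r ∈ Finset.range R, ∑' mn : ℕ × ℕ,
        ‖x r mn.1‖ * ‖y r mn.2‖ * ‖fg.1.1 (eTwoR mn.1)‖ * ‖fg.2.1 (eTwoR mn.2)‖}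

/-- The injective tensor norm `ε` on `ℓ_2 ⊗ ℓ_2` (with respect to the `ℓ_2` norms). -/
noncomputable def injNormL2R (u : ellTwoR ⊗[ℝ] ellTwoR) : ℝ :=
  ⨆ fg : {f : ellTwoR →L[ℝ] ℝ // ‖f‖ ≤ 1} × {g : ellTwoR →L[ℝ] ℝ // ‖g‖ ≤ 1},
    ‖dualPairR fg.1.1 fg.2.1 u‖

open InnerProductSpace
open scoped RealInnerProductSpace

instance : Nonempty {f : ellTwoR →L[ℝ] ℝ // ‖f‖ ≤ 1} := ⟨⟨0, by simp⟩⟩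

lemma eTwoR_apply (n m : ℕ) : eTwoR n m = if m = n then 1 else 0 := by
  simp [eTwoR, Pi.single_apply]

lemma inner_eTwoR_left (n : ℕ) (x : ellTwoR) : ⟪eTwoR n, x⟫ = x n := by
  simp [eTwoR, lp.inner_single_left]

lemma inner_eTwoR_right (x : ellTwoR) (n : ℕ) : ⟪x, eTwoR n⟫ = x n := by
  rw [real_inner_comm, inner_eTwoR_left]

lemma orthonormal_eTwoR : Orthonormal ℝ eTwoR := by
  rw [orthonormal_iff_ite]
  intro i j
  rw [inner_eTwoR_left, eTwoR_apply, eq_comm]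

lemma norm_eTwoR (n : ℕ) : ‖eTwoR n‖ = 1 := orthonormal_eTwoR.1 n

lemma toDual_apply_eTwoR (z : ellTwoR) (m : ℕ) : toDual ℝ ellTwoR z (eTwoR m) = z m :=
  inner_eTwoR_right z m

lemma apply_eTwoR (f : ellTwoR →L[ℝ] ℝ) (m : ℕ) :
    f (eTwoR m) = (toDual ℝ ellTwoR).symm f m := by
  rw [← toDual_apply_eTwoR, LinearIsometryEquiv.apply_symm_apply]

lemma sum_sq_apply_eTwoR_le (f : ellTwoR →L[ℝ] ℝ) (s : Finset ℕ) :
    ∑ m ∈ s, f (eTwoR m) ^ 2 ≤ ‖f‖ ^ 2 := by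
  have h := orthonormal_eTwoR.sum_inner_products_le (s := s) (x := (toDual ℝ ellTwoR).symm f)
  simpa only [inner_eTwoR_left, ← apply_eTwoR, Real.norm_eq_abs, sq_abs,
    LinearIsometryEquiv.norm_map] using h

lemma abs_apply_eTwoR_le {f : ellTwoR →L[ℝ] ℝ} (hf : ‖f‖ ≤ 1) (m : ℕ) : |f (eTwoR m)| ≤ 1 := by
  simpa [norm_eTwoR] using f.le_of_opNorm_le hf (eTwoR m)

lemma dualPairR_tmul (f g : ellTwoR →L[ℝ] ℝ) (x y : ellTwoR) :
    dualPairR f g (x ⊗ₜ y) = f x * g y := rfl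

lemma injNormL2R_eq_of_le {u : ellTwoR ⊗[ℝ] ellTwoR} {c : ℝ}
    (hle : ∀ f g : ellTwoR →L[ℝ] ℝ, ‖f‖ ≤ 1 → ‖g‖ ≤ 1 → |dualPairR f g u| ≤ c)
    {f₀ g₀ : ellTwoR →L[ℝ] ℝ} (hf₀ : ‖f₀‖ ≤ 1) (hg₀ : ‖g₀‖ ≤ 1)
    (h₀ : |dualPairR f₀ g₀ u| = c) : injNormL2R u = c :=
  IsGreatest.csSup_eq ⟨⟨(⟨f₀, hf₀⟩, ⟨g₀, hg₀⟩), h₀⟩,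
    Set.forall_mem_range.2 fun fg => hle _ _ fg.1.2 fg.2.2⟩

noncomputable def absPairing (x : ellTwoR) (f : ellTwoR →L[ℝ] ℝ) : ℝ :=
  ∑' m, ‖x m‖ * ‖f (eTwoR m)‖

lemma holderConjugate_two_two : (2 : ℝ≥0∞).toReal.HolderConjugate (2 : ℝ≥0∞).toReal := by
  rw [ENNReal.toReal_ofNat]; exact Real.HolderConjugate.two_two

lemma summable_absPairing (x : ellTwoR) (f : ellTwoR →L[ℝ] ℝ) :
    Summable fun m => ‖x m‖ * ‖f (eTwoR m)‖ := by
  simp_rw [apply_eTwoR]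
  exact lp.summable_mul holderConjugate_two_two x _

lemma absPairing_nonneg (x : ellTwoR) (f : ellTwoR →L[ℝ] ℝ) : 0 ≤ absPairing x f :=
  tsum_nonneg fun _ => by positivity

lemma absPairing_le (x : ellTwoR) (f : ellTwoR →L[ℝ] ℝ) : absPairing x f ≤ ‖x‖ * ‖f‖ := by
  simpa only [absPairing, apply_eTwoR, LinearIsometryEquiv.norm_map]
    using lp.tsum_mul_le_mul_norm' holderConjugate_two_two x ((toDual ℝ ellTwoR).symm f)

lemma absPairing_eTwoR (i : ℕ) (f : ellTwoR →L[ℝ] ℝ) : absPairing (eTwoR i) f = ‖f (eTwoR i)‖ := by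
  rw [absPairing, tsum_eq_single i fun m hm => by simp [eTwoR_apply, hm]]
  simp [eTwoR_apply]

lemma absPairing_neg (x : ellTwoR) (f : ellTwoR →L[ℝ] ℝ) : absPairing (-x) f = absPairing x f := by
  simp [absPairing]

lemma sum_le_absPairing_toDual (x z : ellTwoR) (s : Finset ℕ) :
    ∑ m ∈ s, |x m| * |z m| ≤ absPairing x (toDual ℝ ellTwoR z) := by
  simpa only [absPairing, toDual_apply_eTwoR, Real.norm_eq_abs]
    using (summable_absPairing x (toDual ℝ ellTwoR z)).sum_le_tsum s fun _ _ => by positivity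

noncomputable def bessSum (R : ℕ) (x y : ℕ → ellTwoR) (f g : ellTwoR →L[ℝ] ℝ) : ℝ :=
  ∑ r ∈ Finset.range R, ∑' mn : ℕ × ℕ,
    ‖x r mn.1‖ * ‖y r mn.2‖ * ‖f (eTwoR mn.1)‖ * ‖g (eTwoR mn.2)‖

noncomputable def bessValue (R : ℕ) (x y : ℕ → ellTwoR) : ℝ :=
  ⨆ fg : {f : ellTwoR →L[ℝ] ℝ // ‖f‖ ≤ 1} × {g : ellTwoR →L[ℝ] ℝ // ‖g‖ ≤ 1},
    bessSum R x y fg.1.1 fg.2.1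

lemma bessSum_eq (R : ℕ) (x y : ℕ → ellTwoR) (f g : ellTwoR →L[ℝ] ℝ) :
    bessSum R x y f g = ∑ r ∈ Finset.range R, absPairing (x r) f * absPairing (y r) g := by
  refine Finset.sum_congr rfl fun r _ => ?_
  have hx := summable_absPairing (x r) f
  have hy := summable_absPairing (y r) g
  rw [absPairing, absPairing, hx.tsum_mul_tsum hy
    (hx.mul_of_nonneg hy (fun _ => by positivity) (fun _ => by positivity))]
  exact tsum_congr fun mn => by ring

lemma bessSum_le_sum_norm_mul_norm (R : ℕ) (x y : ℕ → ellTwoR) {f g : ellTwoR →L[ℝ] ℝ}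
    (hf : ‖f‖ ≤ 1) (hg : ‖g‖ ≤ 1) : bessSum R x y f g ≤ ∑ r ∈ Finset.range R, ‖x r‖ * ‖y r‖ := by
  rw [bessSum_eq]
  refine Finset.sum_le_sum fun r _ => ?_
  calc absPairing (x r) f * absPairing (y r) g ≤ (‖x r‖ * ‖f‖) * (‖y r‖ * ‖g‖) :=
        mul_le_mul (absPairing_le _ _) (absPairing_le _ _) (absPairing_nonneg _ _)
          (by positivity)
    _ ≤ (‖x r‖ * 1) * (‖y r‖ * 1) := by gcongr
    _ = ‖x r‖ * ‖y r‖ := by ring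

lemma bessSum_le_bessValue (R : ℕ) (x y : ℕ → ellTwoR) {f g : ellTwoR →L[ℝ] ℝ}
    (hf : ‖f‖ ≤ 1) (hg : ‖g‖ ≤ 1) : bessSum R x y f g ≤ bessValue R x y :=
  le_ciSup (f := fun fg : {f : ellTwoR →L[ℝ] ℝ // ‖f‖ ≤ 1} ×
      {g : ellTwoR →L[ℝ] ℝ // ‖g‖ ≤ 1} => bessSum R x y fg.1.1 fg.2.1)
    ⟨_, Set.forall_mem_range.2 fun fg => bessSum_le_sum_norm_mul_norm R x y fg.1.2 fg.2.2⟩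
    (⟨f, hf⟩, ⟨g, hg⟩)

lemma bessValue_le {R : ℕ} {x y : ℕ → ellTwoR} {c : ℝ}
    (h : ∀ f g : ellTwoR →L[ℝ] ℝ, ‖f‖ ≤ 1 → ‖g‖ ≤ 1 → bessSum R x y f g ≤ c) :
    bessValue R x y ≤ c :=
  ciSup_le fun fg => h _ _ fg.1.2 fg.2.2

lemma alphaBessL2R_eq_of_le {u : ellTwoR ⊗[ℝ] ellTwoR} {R : ℕ} {x y : ℕ → ellTwoR} {c : ℝ}
    (hu : u = ∑ r ∈ Finset.range R, x r ⊗ₜ y r) (hle : bessValue R x y ≤ c)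
    (hge : ∀ (R : ℕ) (x y : ℕ → ellTwoR),
      u = ∑ r ∈ Finset.range R, x r ⊗ₜ y r → c ≤ bessValue R x y) :
    alphaBessL2R u = c :=
  IsLeast.csInf_eq ⟨⟨R, x, y, hu, (le_antisymm hle (hge R x y hu)).symm⟩,
    by rintro _ ⟨R, x, y, hu, rfl⟩; exact hge R x y hu⟩

noncomputable def tensorCoeff (u : ellTwoR ⊗[ℝ] ellTwoR) (m n : ℕ) : ℝ :=
  dualPairR (toDual ℝ ellTwoR (eTwoR m)) (toDual ℝ ellTwoR (eTwoR n)) u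

lemma tensorCoeff_tmul (x y : ellTwoR) (m n : ℕ) : tensorCoeff (x ⊗ₜ y) m n = x m * y n := by
  simp only [tensorCoeff, dualPairR_tmul, toDual_apply_apply, inner_eTwoR_left]

lemma tensorCoeff_sum (R : ℕ) (x y : ℕ → ellTwoR) (m n : ℕ) :
    tensorCoeff (∑ r ∈ Finset.range R, x r ⊗ₜ y r) m n = ∑ r ∈ Finset.range R, x r m * y r n := by
  rw [tensorCoeff, map_sum]
  exact Finset.sum_congr rfl fun r _ => tensorCoeff_tmul (x r) (y r) m n

lemma sum_mul_tensorCoeff_le_bessValue {u : ellTwoR ⊗[ℝ] ellTwoR} {R : ℕ} {x y : ℕ → ellTwoR}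
    (hu : u = ∑ r ∈ Finset.range R, x r ⊗ₜ y r) {z w : ellTwoR} (hz : ‖z‖ ≤ 1) (hw : ‖w‖ ≤ 1)
    (s t : Finset ℕ) :
    ∑ m ∈ s, ∑ n ∈ t, |z m| * |w n| * |tensorCoeff u m n| ≤ bessValue R x y := calc
  _ ≤ ∑ m ∈ s, ∑ n ∈ t, |z m| * |w n| * ∑ r ∈ Finset.range R, |x r m| * |y r n| := by
    rw [hu]
    gcongr with m _ n _
    simpa only [tensorCoeff_sum, abs_mul]
      using Finset.abs_sum_le_sum_abs (fun r => x r m * y r n) (Finset.range R)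
  _ = ∑ r ∈ Finset.range R, (∑ m ∈ s, |x r m| * |z m|) * (∑ n ∈ t, |y r n| * |w n|) := by
    simp_rw [Finset.sum_mul_sum, Finset.mul_sum]
    rw [Finset.sum_comm (s := Finset.range R)]
    refine Finset.sum_congr rfl fun m _ => ?_
    rw [Finset.sum_comm (s := Finset.range R)]
    exact Finset.sum_congr rfl fun n _ => Finset.sum_congr rfl fun r _ => by ring
  _ ≤ ∑ r ∈ Finset.range R,
      absPairing (x r) (toDual ℝ ellTwoR z) * absPairing (y r) (toDual ℝ ellTwoR w) := by
    gcongr with r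
    · exact absPairing_nonneg _ _
    · exact sum_le_absPairing_toDual _ _ _
    · exact sum_le_absPairing_toDual _ _ _
  _ ≤ bessValue R x y := by
    rw [← bessSum_eq]
    exact bessSum_le_bessValue R x y (by simpa using hz) (by simpa using hw)

lemma injNormL2R_tmul_eTwoR (i j : ℕ) : injNormL2R (eTwoR i ⊗ₜ eTwoR j) = 1 := by
  refine injNormL2R_eq_of_le (fun f g hf hg => ?_) (f₀ := toDual ℝ ellTwoR (eTwoR i))
    (g₀ := toDual ℝ ellTwoR (eTwoR j)) (by simp [norm_eTwoR]) (by simp [norm_eTwoR]) ?_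
  · rw [dualPairR_tmul, abs_mul]
    exact mul_le_one₀ (abs_apply_eTwoR_le hf i) (abs_nonneg _) (abs_apply_eTwoR_le hg j)
  · simp [dualPairR_tmul, norm_eTwoR]

lemma alphaBessL2R_tmul_eTwoR (i j : ℕ) : alphaBessL2R (eTwoR i ⊗ₜ eTwoR j) = 1 := by
  refine alphaBessL2R_eq_of_le (R := 1) (x := fun _ => eTwoR i) (y := fun _ => eTwoR j)
    (by simp) (bessValue_le fun f g hf hg => ?_) fun R x y hu => ?_
  · simp only [bessSum_eq, Finset.sum_range_one, absPairing_eTwoR, Real.norm_eq_abs]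
    exact mul_le_one₀ (abs_apply_eTwoR_le hf i) (abs_nonneg _) (abs_apply_eTwoR_le hg j)
  · simpa [tensorCoeff_tmul, eTwoR_apply] using
      sum_mul_tensorCoeff_le_bessValue hu (le_of_eq (norm_eTwoR i)) (le_of_eq (norm_eTwoR j))
        {i} {j}

noncomputable def vL2R : ellTwoR ⊗[ℝ] ellTwoR :=
  eTwoR 0 ⊗ₜ[ℝ] eTwoR 0 + eTwoR 0 ⊗ₜ[ℝ] eTwoR 1 + eTwoR 1 ⊗ₜ[ℝ] eTwoR 1 - eTwoR 1 ⊗ₜ[ℝ] eTwoR 0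

lemma dualPairR_vL2R (f g : ellTwoR →L[ℝ] ℝ) :
    dualPairR f g vL2R = f (eTwoR 0) * (g (eTwoR 0) + g (eTwoR 1))
      + f (eTwoR 1) * (g (eTwoR 1) - g (eTwoR 0)) := by
  simp only [vL2R, map_add, map_sub, dualPairR_tmul]
  ring

lemma abs_tensorCoeff_vL2R {m n : ℕ} (hm : m < 2) (hn : n < 2) : |tensorCoeff vL2R m n| = 1 := by
  rw [tensorCoeff, dualPairR_vL2R]
  simp only [toDual_apply_eTwoR, eTwoR_apply]
  interval_cases m <;> interval_cases n <;> norm_num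

noncomputable def diagUnit : ellTwoR := (√2)⁻¹ • (eTwoR 0 + eTwoR 1)

lemma norm_diagUnit : ‖diagUnit‖ = 1 := by
  have h : ‖eTwoR 0 + eTwoR 1‖ * ‖eTwoR 0 + eTwoR 1‖ = 2 := by
    rw [norm_add_sq_eq_norm_sq_add_norm_sq_real (orthonormal_eTwoR.2 zero_ne_one),
      norm_eTwoR, norm_eTwoR]
    norm_num
  rw [diagUnit, norm_smul, ← Real.sqrt_mul_self (norm_nonneg (eTwoR 0 + eTwoR 1)), h,
    Real.norm_eq_abs, abs_of_nonneg (by positivity), inv_mul_cancel₀ (by positivity)]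

lemma diagUnit_apply {m : ℕ} (hm : m < 2) : diagUnit m = (√2)⁻¹ := by
  rw [diagUnit, lp.coeFn_smul, lp.coeFn_add]
  simp only [Pi.smul_apply, Pi.add_apply, eTwoR_apply]
  interval_cases m <;> simp

lemma injNormL2R_vL2R : injNormL2R vL2R = √2 := by
  refine injNormL2R_eq_of_le (fun f g hf hg => ?_) (f₀ := toDual ℝ ellTwoR diagUnit)
    (g₀ := toDual ℝ ellTwoR (eTwoR 1)) (by simp [norm_diagUnit]) (by simp [norm_eTwoR]) ?_
  · have hf2 := (sum_sq_apply_eTwoR_le f (Finset.range 2)).trans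
      (pow_le_one₀ (norm_nonneg f) hf)
    have hg2 := (sum_sq_apply_eTwoR_le g (Finset.range 2)).trans
      (pow_le_one₀ (norm_nonneg g) hg)
    simp only [Finset.sum_range_succ, Finset.sum_range_zero, zero_add] at hf2 hg2
    rw [dualPairR_vL2R]
    apply Real.abs_le_sqrt
    -- Lagrange's identity: this square plus the target is `2 (a₀² + a₁²)(b₀² + b₁²)`.
    nlinarith [sq_nonneg (f (eTwoR 0) * (g (eTwoR 1) - g (eTwoR 0))
        - f (eTwoR 1) * (g (eTwoR 0) + g (eTwoR 1))),
      mul_nonneg (sub_nonneg.2 hf2) (sub_nonneg.2 hg2)]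
  · have h : (√2)⁻¹ + (√2)⁻¹ = √2 := by rw [← two_mul, ← div_eq_mul_inv, Real.div_sqrt]
    rw [dualPairR_vL2R]
    simp only [toDual_apply_eTwoR]
    norm_num [diagUnit_apply, eTwoR_apply, h]

noncomputable def vRepRight (r : ℕ) : ellTwoR := [eTwoR 0, eTwoR 1, eTwoR 1, -eTwoR 0].getD r 0

lemma vL2R_eq_sum : vL2R = ∑ r ∈ Finset.range 4, eTwoR (r / 2) ⊗ₜ vRepRight r := by
  simp [Finset.sum_range_succ, vRepRight, vL2R, tmul_neg, sub_eq_add_neg]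

lemma abs_add_abs_apply_eTwoR_le {f : ellTwoR →L[ℝ] ℝ} (hf : ‖f‖ ≤ 1) :
    |f (eTwoR 0)| + |f (eTwoR 1)| ≤ √2 := by
  have h := (sum_sq_apply_eTwoR_le f (Finset.range 2)).trans (pow_le_one₀ (norm_nonneg f) hf)
  simp only [Finset.sum_range_succ, Finset.sum_range_zero, zero_add] at h
  apply Real.le_sqrt_of_sq_le
  nlinarith [sq_abs (f (eTwoR 0)), sq_abs (f (eTwoR 1)),
    sq_nonneg (|f (eTwoR 0)| - |f (eTwoR 1)|)]

lemma bessValue_vRep_le : bessValue 4 (fun r => eTwoR (r / 2)) vRepRight ≤ 2 := by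
  refine bessValue_le fun f g hf hg => ?_
  have hsum : bessSum 4 (fun r => eTwoR (r / 2)) vRepRight f g
      = (|f (eTwoR 0)| + |f (eTwoR 1)|) * (|g (eTwoR 0)| + |g (eTwoR 1)|) := by
    simp only [bessSum_eq, Finset.sum_range_succ, Finset.sum_range_zero, vRepRight,
      List.getD_cons_zero, List.getD_cons_succ, Nat.reduceDiv, absPairing_eTwoR, absPairing_neg,
      Real.norm_eq_abs]
    ring
  rw [hsum]
  calc _ ≤ √2 * √2 := mul_le_mul (abs_add_abs_apply_eTwoR_le hf) (abs_add_abs_apply_eTwoR_le hg)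
        (by positivity) (by positivity)
    _ = 2 := Real.mul_self_sqrt zero_le_two

lemma two_le_bessValue_of_vL2R_eq {R : ℕ} {x y : ℕ → ellTwoR}
    (hv : vL2R = ∑ r ∈ Finset.range R, x r ⊗ₜ y r) : 2 ≤ bessValue R x y := by
  have hnorm : ‖diagUnit‖ ≤ 1 := norm_diagUnit.le
  refine le_of_eq_of_le ?_ (sum_mul_tensorCoeff_le_bessValue hv hnorm hnorm
    (Finset.range 2) (Finset.range 2))
  have hterm : ∀ m ∈ Finset.range 2, ∀ n ∈ Finset.range 2,
      |diagUnit m| * |diagUnit n| * |tensorCoeff vL2R m n| = 1 / 2 := by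
    intro m hm n hn
    rw [Finset.mem_range] at hm hn
    rw [diagUnit_apply hm, diagUnit_apply hn, abs_tensorCoeff_vL2R hm hn, abs_inv,
      abs_of_nonneg (Real.sqrt_nonneg 2), mul_one, ← mul_inv, Real.mul_self_sqrt zero_le_two,
      one_div]
  rw [Finset.sum_congr rfl fun m hm => Finset.sum_congr rfl (hterm m hm)]
  norm_num

lemma alphaBessL2R_vL2R : alphaBessL2R vL2R = 2 :=
  alphaBessL2R_eq_of_le vL2R_eq_sum bessValue_vRep_le fun _ _ _ => two_le_bessValue_of_vL2R_eq

/-- For the canonical orthonormal basis `𝓕 = 𝓖 = ((e_m, e_m*))` of the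
real `ℓ_2` and `v = e_1 ⊗ e_1 + e_1 ⊗ e_2 + e_2 ⊗ e_2 − e_2 ⊗ e_1`, one has
`ε(v) = √2` while `α^Bess_{𝓕,𝓖}(v) = 2`; in particular `α^Bess_{𝓕,𝓖}` is not
proportional to the injective norm on `ℓ_2 ⊗ ℓ_2`. -/
theorem alphaBess_ellTwoR_ne_inj :
    injNormL2R (eTwoR 0 ⊗ₜ[ℝ] eTwoR 0 + eTwoR 0 ⊗ₜ[ℝ] eTwoR 1
        + eTwoR 1 ⊗ₜ[ℝ] eTwoR 1 - eTwoR 1 ⊗ₜ[ℝ] eTwoR 0) = Real.sqrt 2 ∧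
    alphaBessL2R (eTwoR 0 ⊗ₜ[ℝ] eTwoR 0 + eTwoR 0 ⊗ₜ[ℝ] eTwoR 1
        + eTwoR 1 ⊗ₜ[ℝ] eTwoR 1 - eTwoR 1 ⊗ₜ[ℝ] eTwoR 0) = 2 ∧
    ¬ ∃ cst : ℝ, ∀ w : ellTwoR ⊗[ℝ] ellTwoR,
        alphaBessL2R w = cst * injNormL2R w := by
  refine ⟨injNormL2R_vL2R, alphaBessL2R_vL2R, ?_⟩
  rintro ⟨c, hc⟩
  have hc_one : c = 1 := by
    simpa [alphaBessL2R_tmul_eTwoR, injNormL2R_tmul_eTwoR] using (hc (eTwoR 0 ⊗ₜ eTwoR 0)).symm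
  have h := hc vL2R
  rw [alphaBessL2R_vL2R, injNormL2R_vL2R, hc_one, one_mul] at h
  have h2 := Real.mul_self_sqrt zero_le_two
  rw [← h] at h2
  norm_num at h2
end
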